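/- arXiv:2406.14428 — 7 statements merged into one kernel-verified Lean document; each statement's English description precedes it below -/
import Mathlib

section
/- If κ and ℓ are nonnegative, nonincreasing, locally integrable functions on (0,∞) with κ ⋆ ℓ = 1, then h_ℓ(t) h_κ(t) ≥ t for all t > 0, where h_κ(t) = ∫₀ᵗ κ and h_ℓ(t) = ∫₀ᵗ ℓ. In particular h_ℓ(t) ≥ t / h_κ(t). -/
open MeasureTheory Set intervalIntegral
open scoped ENNReal

/-!
Integrating `κ ⋆ ℓ = 1` over `(0, t)` gives `t ≤ ∫ κₜ ⋆ ℓₜ`, where `κₜ`, `ℓₜ` are the truncations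
of `κ`, `ℓ` to `(0, t)`, and by Tonelli the integral of a convolution over the line is
`∫ κₜ · ∫ ℓₜ = h_κ(t) h_ℓ(t)`. The truncations are integrable thanks to monotonicity:
if `ℓ s > 0`, then `ℓ (s - τ) ≥ ℓ s` gives `ℓ s · ∫₀ˢ κ ≤ (κ ⋆ ℓ)(s) = 1`.
-/

theorem MeasureTheory.lintegral_lconvolution {G : Type*} [MeasurableSpace G] [AddGroup G]
    [MeasurableAdd₂ G] [MeasurableNeg G] {μ : Measure G} [μ.IsAddLeftInvariant] [SFinite μ]
    {f g : G → ℝ≥0∞} (hf : AEMeasurable f μ) (hg : AEMeasurable g μ) :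
    ∫⁻ x, (f ⋆ₗ[μ] g) x ∂μ = (∫⁻ x, f x ∂μ) * ∫⁻ x, g x ∂μ := by
  simp only [lconvolution_def]
  rw [lintegral_lintegral_swap (by fun_prop), ← lintegral_mul_const'' _ hf]
  refine lintegral_congr fun y => ?_
  rw [lintegral_add_left_eq_self (fun x => f y * g x) (-y), lintegral_const_mul'' _ hg]

theorem ofReal_le_lintegral_mul_lintegral_of_one_le_conv {f g : ℝ → ℝ≥0∞} {t : ℝ}
    (hf : AEMeasurable f (volume.restrict (Ioo 0 t)))
    (hg : AEMeasurable g (volume.restrict (Ioo 0 t)))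
    (hconv : ∀ s ∈ Ioo 0 t, 1 ≤ ∫⁻ τ in Ioo 0 s, f τ * g (s - τ)) :
    ENNReal.ofReal t ≤ (∫⁻ τ in Ioo 0 t, f τ) * ∫⁻ τ in Ioo 0 t, g τ := by
  set F := (Ioo 0 t).indicator f
  set G := (Ioo 0 t).indicator g
  have hF : AEMeasurable F := (aemeasurable_indicator_iff measurableSet_Ioo).2 hf
  have hG : AEMeasurable G := (aemeasurable_indicator_iff measurableSet_Ioo).2 hg
  have hconvFG : ∀ s ∈ Ioo 0 t, 1 ≤ (F ⋆ₗ G) s := fun s hs => calc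
    1 ≤ ∫⁻ τ in Ioo 0 s, f τ * g (s - τ) := hconv s hs
    _ = ∫⁻ τ in Ioo 0 s, F τ * G (-τ + s) := by
      refine setLIntegral_congr_fun measurableSet_Ioo fun τ hτ => ?_
      have hτt : τ ∈ Ioo 0 t := ⟨hτ.1, hτ.2.trans hs.2⟩
      have hsτ : s - τ ∈ Ioo 0 t := ⟨by linarith [hτ.2], by linarith [hτ.1, hs.2]⟩
      simp only [F, G, neg_add_eq_sub, indicator_of_mem hτt, indicator_of_mem hsτ]
    _ ≤ (F ⋆ₗ G) s := setLIntegral_le_lintegral _ _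
  calc ENNReal.ofReal t = ∫⁻ _ in Ioo 0 t, 1 := by simp
    _ ≤ ∫⁻ s in Ioo 0 t, (F ⋆ₗ G) s := setLIntegral_mono' measurableSet_Ioo hconvFG
    _ ≤ ∫⁻ s, (F ⋆ₗ G) s := setLIntegral_le_lintegral _ _
    _ = (∫⁻ τ in Ioo 0 t, f τ) * ∫⁻ τ in Ioo 0 t, g τ := by
      rw [lintegral_lconvolution hF hG, lintegral_indicator measurableSet_Ioo,
        lintegral_indicator measurableSet_Ioo]

theorem ofReal_intervalIntegral_eq_lintegral_Ioo {f : ℝ → ℝ} {a b : ℝ} (hab : a ≤ b)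
    (hf : IntegrableOn f (Ioo a b)) (hf0 : ∀ x ∈ Ioo a b, 0 ≤ f x) :
    ENNReal.ofReal (∫ x in a..b, f x) = ∫⁻ x in Ioo a b, ENNReal.ofReal (f x) := by
  rw [integral_of_le hab, integral_Ioc_eq_integral_Ioo,
    ofReal_integral_eq_lintegral_ofReal hf (ae_restrict_of_forall_mem measurableSet_Ioo hf0)]

/-- A nonzero value of the integral forces integrability (the Bochner integral of a
non-integrable function is `0`). -/
theorem lintegral_Ioo_eq_of_intervalIntegral_eq {f : ℝ → ℝ} {a b c : ℝ} (hab : a ≤ b)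
    (hf0 : ∀ x ∈ Ioo a b, 0 ≤ f x) (h : ∫ x in a..b, f x = c) (hc : c ≠ 0) :
    ∫⁻ x in Ioo a b, ENNReal.ofReal (f x) = ENNReal.ofReal c := by
  have hf : IntegrableOn f (Ioo a b) := by
    by_contra hf
    rw [integral_of_le hab, integral_Ioc_eq_integral_Ioo, integral_undef hf] at h
    exact hc h.symm
  rw [← h, ofReal_intervalIntegral_eq_lintegral_Ioo hab hf hf0]

theorem MeasureTheory.LocallyIntegrableOn.integrableOn_Ioo_of_integrableOn_Ioo
    {E : Type*} [NormedAddCommGroup E] {f : ℝ → E} {a s : ℝ}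
    (hf : LocallyIntegrableOn f (Ioi a)) (hs : a < s) (h : IntegrableOn f (Ioo a s)) (t : ℝ) :
    IntegrableOn f (Ioo a t) := by
  have hIcc : IntegrableOn f (Icc s t) :=
    hf.integrableOn_compact_subset (fun x hx => hs.trans_le hx.1) isCompact_Icc
  refine (h.union hIcc).mono_set fun x hx => ?_
  rcases lt_or_ge x s with hxs | hxs
  · exact Or.inl ⟨hx.1, hxs⟩
  · exact Or.inr ⟨hxs, hx.2.le⟩

theorem lintegral_ofReal_mul_ofReal_Ioo_eq_one {κ ℓ : ℝ → ℝ} {s : ℝ} (hs : 0 < s)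
    (hκ0 : ∀ t ∈ Ioi (0:ℝ), 0 ≤ κ t) (hℓ0 : ∀ t ∈ Ioi (0:ℝ), 0 ≤ ℓ t)
    (hconv : (∫ τ in (0:ℝ)..s, κ τ * ℓ (s - τ)) = 1) :
    ∫⁻ τ in Ioo 0 s, ENNReal.ofReal (κ τ) * ENNReal.ofReal (ℓ (s - τ)) = 1 := by
  rw [← ENNReal.ofReal_one, ← lintegral_Ioo_eq_of_intervalIntegral_eq hs.le
    (fun τ hτ => mul_nonneg (hκ0 τ hτ.1) (hℓ0 _ (sub_pos.2 hτ.2))) hconv one_ne_zero]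
  exact setLIntegral_congr_fun measurableSet_Ioo fun τ hτ => (ENNReal.ofReal_mul (hκ0 τ hτ.1)).symm

theorem integrableOn_Ioo_of_conv_eq_one {κ ℓ : ℝ → ℝ}
    (hκint : LocallyIntegrableOn κ (Ioi 0)) (hκ0 : ∀ t ∈ Ioi (0:ℝ), 0 ≤ κ t)
    (hℓ0 : ∀ t ∈ Ioi (0:ℝ), 0 ≤ ℓ t) (hℓmono : AntitoneOn ℓ (Ioi 0))
    (hconv : ∀ t > (0:ℝ), (∫ τ in (0:ℝ)..t, κ τ * ℓ (t - τ)) = 1) (t : ℝ) :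
    IntegrableOn κ (Ioo 0 t) := by
  obtain ⟨s, hs, hℓs⟩ : ∃ s > 0, ℓ s ≠ 0 := by
    by_contra! h
    have h1 := hconv 1 one_pos
    rw [integral_of_le zero_le_one, integral_Ioc_eq_integral_Ioo,
      setIntegral_congr_fun measurableSet_Ioo (g := 0)
        fun τ hτ => by simp [h (1 - τ) (by linarith [hτ.2])]] at h1
    simp at h1
  have hbound : ENNReal.ofReal (ℓ s) * ∫⁻ τ in Ioo 0 s, ENNReal.ofReal (κ τ) ≤ 1 := calc
    _ = ∫⁻ τ in Ioo 0 s, ENNReal.ofReal (κ τ) * ENNReal.ofReal (ℓ s) := by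
      rw [mul_comm, lintegral_mul_const' _ _ ENNReal.ofReal_ne_top]
    _ ≤ ∫⁻ τ in Ioo 0 s, ENNReal.ofReal (κ τ) * ENNReal.ofReal (ℓ (s - τ)) :=
      setLIntegral_mono' measurableSet_Ioo fun τ hτ => by
        gcongr
        exact hℓmono (sub_pos.2 hτ.2) hs (by linarith [hτ.1])
    _ = 1 := lintegral_ofReal_mul_ofReal_Ioo_eq_one hs hκ0 hℓ0 (hconv s hs)
  have hfin : ∫⁻ τ in Ioo 0 s, ENNReal.ofReal (κ τ) ≠ ⊤ :=
    (ENNReal.lt_top_of_mul_ne_top_right (ne_top_of_le_ne_top ENNReal.one_ne_top hbound)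
      (ENNReal.ofReal_pos.2 ((hℓ0 s hs).lt_of_ne' hℓs)).ne').ne
  have hκs : IntegrableOn κ (Ioo 0 s) :=
    (lintegral_ofReal_ne_top_iff_integrable
      (hκint.aestronglyMeasurable.mono_set Ioo_subset_Ioi_self)
      (ae_restrict_of_forall_mem measurableSet_Ioo fun τ hτ => hκ0 τ hτ.1)).1 hfin
  exact hκint.integrableOn_Ioo_of_integrableOn_Ioo hs hκs t

theorem stmt1 (κ ℓ : ℝ → ℝ)
    (hκint : LocallyIntegrableOn κ (Ioi 0))
    (hℓint : LocallyIntegrableOn ℓ (Ioi 0))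
    (hκ0 : ∀ t ∈ Ioi (0:ℝ), 0 ≤ κ t)
    (hℓ0 : ∀ t ∈ Ioi (0:ℝ), 0 ≤ ℓ t)
    (hκmono : AntitoneOn κ (Ioi 0))
    (hℓmono : AntitoneOn ℓ (Ioi 0))
    (hconv : ∀ t > (0:ℝ), (∫ τ in (0:ℝ)..t, κ τ * ℓ (t - τ)) = 1) :
    ∀ t > (0:ℝ), t ≤ (∫ τ in (0:ℝ)..t, ℓ τ) * (∫ τ in (0:ℝ)..t, κ τ) := by
  have hconv_comm : ∀ t > (0:ℝ), (∫ τ in (0:ℝ)..t, ℓ τ * κ (t - τ)) = 1 := fun t ht => by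
    have h := integral_comp_sub_left (fun τ => κ τ * ℓ (t - τ)) t (a := 0) (b := t)
    simp only [sub_sub_cancel, sub_self, sub_zero] at h
    rw [← hconv t ht, ← h]
    simp only [mul_comm]
  intro t ht
  have hκt := integrableOn_Ioo_of_conv_eq_one hκint hκ0 hℓ0 hℓmono hconv t
  have hℓt := integrableOn_Ioo_of_conv_eq_one hℓint hℓ0 hκ0 hκmono hconv_comm t
  have hcore := ofReal_le_lintegral_mul_lintegral_of_one_le_conv
    hℓt.aemeasurable.ennreal_ofReal hκt.aemeasurable.ennreal_ofReal fun s hs =>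
      (lintegral_ofReal_mul_ofReal_Ioo_eq_one hs.1 hℓ0 hκ0 (hconv_comm s hs.1)).ge
  have hℓ_nonneg : 0 ≤ ∫ τ in (0:ℝ)..t, ℓ τ := by
    rw [integral_of_le ht.le, integral_Ioc_eq_integral_Ioo]
    exact setIntegral_nonneg measurableSet_Ioo fun τ hτ => hℓ0 τ hτ.1
  rw [← ofReal_intervalIntegral_eq_lintegral_Ioo ht.le hℓt fun τ hτ => hℓ0 τ hτ.1,
    ← ofReal_intervalIntegral_eq_lintegral_Ioo ht.le hκt fun τ hτ => hκ0 τ hτ.1,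
    ← ENNReal.ofReal_mul hℓ_nonneg, ENNReal.ofReal_le_ofReal_iff'] at hcore
  exact hcore.resolve_right ht.not_ge
end

section
/- If κ, ℓ are nonnegative nonincreasing locally integrable functions on (0,∞) with κ ⋆ ℓ = 1, and c₁ t^{−α} ≤ κ(t) ≤ c₂ t^{−α} for all t > 0 with 0 < α < 1 and c₁, c₂ > 0, then there exist constants C₁, C₂ > 0 such that ℓ(t) ≤ C₁ t^{α−1} and ∫₀ᵗ ℓ ≥ C₂ t^{α} for all t > 0. -/
/-!
Since `ℓ` is nonincreasing, `ℓ t * ∫₀ᵗ κ ≤ (κ ⋆ ℓ) t = 1`, and the lower bound on `κ` gives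
`∫₀ᵗ κ ≥ c₁ t^(1-α) / (1-α)`; hence `ℓ t ≤ (1-α)/c₁ * t^(α-1)`. For the other bound write
`t = m + s` and split the convolution at `τ = s`: `1 ≤ ℓ m * ∫₀ˢ κ + κ s * ∫₀ᵗ ℓ`. By the first
bound and the upper bound on `κ`, the first term is at most `c₂/c₁ * (s/m)^(1-α)`, which is `1/2`
for `s = δ m` with a suitable `δ`; then `∫₀ᵗ ℓ ≥ 1 / (2 κ s) ≥ s^α / (2 c₂)`, and `s` is a fixed
fraction of `t`.
-/

open MeasureTheory Set intervalIntegral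

section PowerLaw

variable {f : ℝ → ℝ} {α b c r : ℝ}

theorem intervalIntegrable_of_le_mul_rpow (hr : -1 < r) (hb : 0 ≤ b)
    (hf : LocallyIntegrableOn f (Ioi 0)) (hf0 : ∀ t ∈ Ioi (0:ℝ), 0 ≤ f t)
    (hle : ∀ t > (0:ℝ), f t ≤ c * t ^ r) : IntervalIntegrable f volume 0 b := by
  refine ((intervalIntegrable_rpow' hr).const_mul c).mono_fun' ?_ ?_ <;> rw [uIoc_of_le hb]
  · exact hf.aestronglyMeasurable.mono_measure (Measure.restrict_mono Ioc_subset_Ioi_self le_rfl)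
  · refine ae_restrict_of_forall_mem measurableSet_Ioc fun t ht => ?_
    simpa only [Real.norm_of_nonneg (hf0 t ht.1)] using hle t ht.1

theorem integral_mul_rpow_neg (c : ℝ) (hα : α < 1) :
    ∫ t in (0:ℝ)..b, c * t ^ (-α) = c * (b ^ (1 - α) / (1 - α)) := by
  rw [intervalIntegral.integral_const_mul, integral_rpow (Or.inl (by linarith)), neg_add_eq_sub,
    Real.zero_rpow (by linarith), sub_zero]

theorem mul_rpow_neg_le_integral (hα : α < 1) (hb : 0 ≤ b) (hf : IntervalIntegrable f volume 0 b)
    (hle : ∀ t > (0:ℝ), c * t ^ (-α) ≤ f t) :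
    c * (b ^ (1 - α) / (1 - α)) ≤ ∫ t in (0:ℝ)..b, f t := by
  rw [← integral_mul_rpow_neg c hα]
  exact integral_mono_on_of_le_Ioo hb ((intervalIntegrable_rpow' (by linarith)).const_mul c) hf
    fun t ht => hle t ht.1

theorem integral_le_mul_rpow_neg (hα : α < 1) (hb : 0 ≤ b) (hf : IntervalIntegrable f volume 0 b)
    (hle : ∀ t > (0:ℝ), f t ≤ c * t ^ (-α)) :
    ∫ t in (0:ℝ)..b, f t ≤ c * (b ^ (1 - α) / (1 - α)) := by
  rw [← integral_mul_rpow_neg c hα]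
  exact integral_mono_on_of_le_Ioo hb hf ((intervalIntegrable_rpow' (by linarith)).const_mul c)
    fun t ht => hle t ht.1

end PowerLaw

section Convolution

variable {κ ℓ : ℝ → ℝ} {m s t : ℝ}

theorem mul_integral_le_integral_mul_sub (ht : 0 ≤ t) (hκ0 : ∀ τ ∈ Ioi (0:ℝ), 0 ≤ κ τ)
    (hℓ : AntitoneOn ℓ (Ioi 0)) (hκi : IntervalIntegrable κ volume 0 t)
    (hi : IntervalIntegrable (fun τ => κ τ * ℓ (t - τ)) volume 0 t) :
    ℓ t * ∫ τ in (0:ℝ)..t, κ τ ≤ ∫ τ in (0:ℝ)..t, κ τ * ℓ (t - τ) := by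
  rw [← intervalIntegral.integral_const_mul]
  refine integral_mono_on_of_le_Ioo ht (hκi.const_mul _) hi fun τ ⟨hτ0, hτt⟩ => ?_
  rw [mul_comm]
  exact mul_le_mul_of_nonneg_left
    (hℓ (sub_pos.2 hτt) (hτ0.trans hτt) (by linarith)) (hκ0 τ hτ0)

-- Split at `τ = s`: before it `ℓ (m + s - τ) ≤ ℓ m`, after it `κ τ ≤ κ s`.
theorem integral_mul_sub_le_of_antitoneOn (hm : 0 < m) (hs : 0 < s)
    (hκ0 : ∀ τ ∈ Ioi (0:ℝ), 0 ≤ κ τ) (hℓ0 : ∀ τ ∈ Ioi (0:ℝ), 0 ≤ ℓ τ)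
    (hκ : AntitoneOn κ (Ioi 0)) (hℓ : AntitoneOn ℓ (Ioi 0))
    (hκi : IntervalIntegrable κ volume 0 s) (hℓi : IntervalIntegrable ℓ volume 0 (m + s))
    (hi : IntervalIntegrable (fun τ => κ τ * ℓ (m + s - τ)) volume 0 (m + s)) :
    ∫ τ in (0:ℝ)..(m + s), κ τ * ℓ (m + s - τ)
      ≤ ℓ m * (∫ τ in (0:ℝ)..s, κ τ) + κ s * ∫ τ in (0:ℝ)..(m + s), ℓ τ := by
  set t := m + s with ht
  have hst : s ≤ t := by linarith
  have hs_mem : s ∈ uIcc 0 t := mem_uIcc_of_le hs.le hst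
  have hi₁ := hi.mono_set (uIcc_subset_uIcc left_mem_uIcc hs_mem)
  have hi₂ := hi.mono_set (uIcc_subset_uIcc hs_mem right_mem_uIcc)
  have hℓi' : IntervalIntegrable (fun τ => ℓ (t - τ)) volume s t := by
    have h := (hℓi.comp_sub_left t).symm
    simp only [sub_self, sub_zero] at h
    exact h.mono_set (uIcc_subset_uIcc hs_mem right_mem_uIcc)
  rw [← integral_add_adjacent_intervals hi₁ hi₂]
  gcongr
  · rw [← intervalIntegral.integral_const_mul]
    refine integral_mono_on_of_le_Ioo hs.le hi₁ (hκi.const_mul _) fun τ ⟨hτ0, hτs⟩ => ?_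
    rw [mul_comm (ℓ m)]
    exact mul_le_mul_of_nonneg_left (hℓ hm (show (0:ℝ) < t - τ by linarith) (by linarith))
      (hκ0 τ hτ0)
  · calc ∫ τ in s..t, κ τ * ℓ (t - τ)
        ≤ ∫ τ in s..t, κ s * ℓ (t - τ) := by
          refine integral_mono_on_of_le_Ioo hst hi₂ (hℓi'.const_mul _) fun τ ⟨hsτ, hτt⟩ => ?_
          exact mul_le_mul_of_nonneg_right (hκ hs (hs.trans hsτ) hsτ.le) (hℓ0 _ (sub_pos.2 hτt))
      _ = κ s * ∫ τ in (0:ℝ)..m, ℓ τ := by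
          rw [intervalIntegral.integral_const_mul, integral_comp_sub_left, sub_self, ht,
            add_sub_cancel_right]
      _ ≤ κ s * ∫ τ in (0:ℝ)..t, ℓ τ := by
          gcongr
          · exact hκ0 s hs
          · exact integral_mono_interval le_rfl hm.le (by linarith)
              (ae_restrict_of_forall_mem measurableSet_Ioc fun τ hτ => hℓ0 τ hτ.1) hℓi

end Convolution

section PowerLawKernel

variable {κ ℓ : ℝ → ℝ} {α c₁ c₂ a m s t : ℝ}

theorem le_mul_rpow_of_integral_mul_sub_eq_one (hα : α < 1) (hc₁ : 0 < c₁) (ht : 0 < t)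
    (hκ0 : ∀ τ ∈ Ioi (0:ℝ), 0 ≤ κ τ) (hℓ0 : ∀ τ ∈ Ioi (0:ℝ), 0 ≤ ℓ τ)
    (hℓ : AntitoneOn ℓ (Ioi 0)) (hκi : IntervalIntegrable κ volume 0 t)
    (hκlow : ∀ τ > (0:ℝ), c₁ * τ ^ (-α) ≤ κ τ)
    (hconv : ∫ τ in (0:ℝ)..t, κ τ * ℓ (t - τ) = 1) :
    ℓ t ≤ (1 - α) / c₁ * t ^ (α - 1) := by
  have h1α : 0 < 1 - α := sub_pos.2 hα
  have hK := mul_rpow_neg_le_integral hα ht.le hκi hκlow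
  have hconv_le := mul_integral_le_integral_mul_sub ht.le hκ0 hℓ hκi
    (intervalIntegrable_of_integral_ne_zero (by simp [hconv]))
  rw [hconv] at hconv_le
  calc ℓ t ≤ 1 / (c₁ * (t ^ (1 - α) / (1 - α))) :=
        (le_div_iff₀ (by positivity)).2 ((mul_le_mul_of_nonneg_left hK (hℓ0 t ht)).trans hconv_le)
    _ = (1 - α) / c₁ * t ^ (α - 1) := by
        rw [show α - 1 = -(1 - α) by ring, Real.rpow_neg ht.le]
        field_simp

theorem mul_integral_le_mul_div_rpow (hα : α < 1) (hc₁ : 0 < c₁) (hc₂ : 0 ≤ c₂) (hm : 0 < m)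
    (hs : 0 < s) (hκi : IntervalIntegrable κ volume 0 s)
    (hκup : ∀ τ > (0:ℝ), κ τ ≤ c₂ * τ ^ (-α)) (ha0 : 0 ≤ a)
    (ha : a ≤ (1 - α) / c₁ * m ^ (α - 1)) :
    a * ∫ τ in (0:ℝ)..s, κ τ ≤ c₂ / c₁ * (s / m) ^ (1 - α) := by
  have h1α : 0 < 1 - α := sub_pos.2 hα
  calc a * ∫ τ in (0:ℝ)..s, κ τ ≤ a * (c₂ * (s ^ (1 - α) / (1 - α))) :=
        mul_le_mul_of_nonneg_left (integral_le_mul_rpow_neg hα hs.le hκi hκup) ha0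
    _ ≤ (1 - α) / c₁ * m ^ (α - 1) * (c₂ * (s ^ (1 - α) / (1 - α))) :=
        mul_le_mul_of_nonneg_right ha (by positivity)
    _ = c₂ / c₁ * (s / m) ^ (1 - α) := by
        rw [show α - 1 = -(1 - α) by ring, Real.rpow_neg hm.le, Real.div_rpow hs.le hm.le]
        field_simp

theorem rpow_div_le_integral_of_integral_mul_sub_eq_one (hc₂ : 0 < c₂) (hm : 0 < m) (hs : 0 < s)
    (hκ0 : ∀ τ ∈ Ioi (0:ℝ), 0 ≤ κ τ) (hℓ0 : ∀ τ ∈ Ioi (0:ℝ), 0 ≤ ℓ τ)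
    (hκ : AntitoneOn κ (Ioi 0)) (hℓ : AntitoneOn ℓ (Ioi 0))
    (hκi : IntervalIntegrable κ volume 0 s) (hℓi : IntervalIntegrable ℓ volume 0 (m + s))
    (hconv : ∫ τ in (0:ℝ)..(m + s), κ τ * ℓ (m + s - τ) = 1)
    (hκs : κ s ≤ c₂ * s ^ (-α)) (htail : ℓ m * ∫ τ in (0:ℝ)..s, κ τ ≤ 1 / 2) :
    s ^ α / (2 * c₂) ≤ ∫ τ in (0:ℝ)..(m + s), ℓ τ := by
  have hsplit := integral_mul_sub_le_of_antitoneOn hm hs hκ0 hℓ0 hκ hℓ hκi hℓi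
    (intervalIntegrable_of_integral_ne_zero (by simp [hconv]))
  rw [hconv] at hsplit
  have hhead : 1 / 2 ≤ κ s * ∫ τ in (0:ℝ)..(m + s), ℓ τ := by linarith
  have hhalf : 1 / 2 ≤ c₂ * s ^ (-α) * ∫ τ in (0:ℝ)..(m + s), ℓ τ :=
    hhead.trans (mul_le_mul_of_nonneg_right hκs
      (pos_of_mul_pos_right (by linarith) (hκ0 s hs)).le)
  calc s ^ α / (2 * c₂) = 1 / 2 / (c₂ * s ^ (-α)) := by
        rw [Real.rpow_neg hs.le]
        field_simp
    _ ≤ ∫ τ in (0:ℝ)..(m + s), ℓ τ := by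
        rw [div_le_iff₀ (by positivity)]
        linarith

end PowerLawKernel

theorem stmt2 (κ ℓ : ℝ → ℝ) (α c₁ c₂ : ℝ)
    (hα0 : 0 < α) (hα1 : α < 1) (hc₁ : 0 < c₁) (hc₂ : 0 < c₂)
    (hκint : LocallyIntegrableOn κ (Ioi 0))
    (hℓint : LocallyIntegrableOn ℓ (Ioi 0))
    (hκ0 : ∀ t ∈ Ioi (0:ℝ), 0 ≤ κ t)
    (hℓ0 : ∀ t ∈ Ioi (0:ℝ), 0 ≤ ℓ t)
    (hκmono : AntitoneOn κ (Ioi 0))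
    (hℓmono : AntitoneOn ℓ (Ioi 0))
    (hconv : ∀ t > (0:ℝ), (∫ τ in (0:ℝ)..t, κ τ * ℓ (t - τ)) = 1)
    (hκlow : ∀ t > (0:ℝ), c₁ * t ^ (-α) ≤ κ t)
    (hκup : ∀ t > (0:ℝ), κ t ≤ c₂ * t ^ (-α)) :
    ∃ C₁ > (0:ℝ), ∃ C₂ > (0:ℝ), ∀ t > (0:ℝ),
      ℓ t ≤ C₁ * t ^ (α - 1) ∧ C₂ * t ^ α ≤ ∫ τ in (0:ℝ)..t, ℓ τ := by
  have h1α : 0 < 1 - α := sub_pos.2 hα1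
  have hκi : ∀ b ≥ (0:ℝ), IntervalIntegrable κ volume 0 b := fun b hb =>
    intervalIntegrable_of_le_mul_rpow (by linarith) hb hκint hκ0 hκup
  have hℓle : ∀ t > (0:ℝ), ℓ t ≤ (1 - α) / c₁ * t ^ (α - 1) := fun t ht =>
    le_mul_rpow_of_integral_mul_sub_eq_one hα1 hc₁ ht hκ0 hℓ0 hℓmono (hκi t ht.le) hκlow
      (hconv t ht)
  have hℓi : ∀ b ≥ (0:ℝ), IntervalIntegrable ℓ volume 0 b := fun b hb =>
    intervalIntegrable_of_le_mul_rpow (by linarith) hb hℓint hℓ0 hℓle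
  set δ := (c₁ / (2 * c₂)) ^ (1 - α)⁻¹
  have hδ : 0 < δ := by positivity
  have hδα : c₂ / c₁ * δ ^ (1 - α) = 1 / 2 := by
    rw [Real.rpow_inv_rpow (by positivity) h1α.ne']
    field_simp
  refine ⟨(1 - α) / c₁, by positivity, (δ / (1 + δ)) ^ α / (2 * c₂), by positivity,
    fun t ht => ⟨hℓle t ht, ?_⟩⟩
  set m := t / (1 + δ) with hm_def
  set s := δ / (1 + δ) * t with hs_def
  have hm : 0 < m := by positivity
  have hs : 0 < s := by positivity
  have hmst : m + s = t := by rw [hm_def, hs_def]; field_simp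
  have hsm : s / m = δ := by rw [hm_def, hs_def]; field_simp
  have htail := mul_integral_le_mul_div_rpow hα1 hc₁ hc₂.le hm hs (hκi s hs.le) hκup
    (hℓ0 m hm) (hℓle m hm)
  rw [hsm, hδα] at htail
  have key := rpow_div_le_integral_of_integral_mul_sub_eq_one hc₂ hm hs hκ0 hℓ0 hκmono hℓmono
    (hκi s hs.le) (hmst ▸ hℓi t ht.le) (hmst ▸ hconv t ht) (hκup s hs) htail
  rwa [hmst, hs_def, Real.mul_rpow (by positivity) ht.le, mul_div_right_comm] at key
end

section
/- Let ℓ be a nonnegative locally integrable function on (0,∞) and μ > 0. If ρ₁ is a solution on (0,∞) of the Volterra equation ρ₁(t) + μ ∫₀ᵗ ℓ(t−s) ρ₁(s) ds = 1 with 0 ≤ ρ₁ ≤ 1 and ρ₁ nonincreasing, then ρ₁(t) ≤ 1 / (1 + μ h_ℓ(t)), where h_ℓ(t) = ∫₀ᵗ ℓ. -/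
/-!
Since `ρ₁` is nonincreasing, `ρ₁ s ≥ ρ₁ t` for `s ≤ t`, so the memory term of the Volterra
equation at time `t` is at least `ρ₁ t * ∫₀ᵗ ℓ(t - s) ds = ρ₁ t * h_ℓ(t)`. Hence
`1 ≥ ρ₁ t * (1 + μ h_ℓ(t))`. If `ℓ` is not integrable on `(0, t]`, Lean's integral is `0` and the
bound is just `ρ₁ t ≤ 1`.
-/

open MeasureTheory Set intervalIntegral

section AntitoneWeight

variable {f g : ℝ → ℝ} {a b : ℝ}

theorem IntervalIntegrable.mul_antitoneOn (hf : IntervalIntegrable f volume a b) (hab : a ≤ b)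
    (hg : AntitoneOn g (Icc a b)) : IntervalIntegrable (fun s => f s * g s) volume a b := by
  rw [intervalIntegrable_iff_integrableOn_Ioc_of_le hab] at hf ⊢
  have hg' : AntitoneOn g (Ioc a b) := hg.mono Ioc_subset_Icc_self
  refine hf.mul_bdd (c := max |g b| |g a|)
    (aemeasurable_restrict_of_antitoneOn measurableSet_Ioc hg').aestronglyMeasurable ?_
  filter_upwards [ae_restrict_mem measurableSet_Ioc] with s hs
  exact abs_le_max_abs_abs (hg (mem_Icc_of_Ioc hs) (right_mem_Icc.2 hab) hs.2)
    (hg (left_mem_Icc.2 hab) (mem_Icc_of_Ioc hs) hs.1.le)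

theorem mul_integral_le_integral_mul_of_antitoneOn (hab : a ≤ b)
    (hf : IntervalIntegrable f volume a b) (hf0 : ∀ s ∈ Ioo a b, 0 ≤ f s)
    (hg : AntitoneOn g (Icc a b)) : g b * ∫ s in a..b, f s ≤ ∫ s in a..b, f s * g s := by
  rw [← intervalIntegral.integral_const_mul]
  refine integral_mono_on_of_le_Ioo hab (hf.const_mul _) (hf.mul_antitoneOn hab hg) fun s hs => ?_
  rw [mul_comm]
  exact mul_le_mul_of_nonneg_left
    (hg (Ioo_subset_Icc_self hs) (right_mem_Icc.2 hab) hs.2.le) (hf0 s hs)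

end AntitoneWeight

theorem stmt3_general (ℓ ρ₁ : ℝ → ℝ) (μ : ℝ) (hμ : 0 < μ)
    (hℓ0 : ∀ t ∈ Ioi (0:ℝ), 0 ≤ ℓ t)
    (hρ1 : ∀ t, ρ₁ t ≤ 1)
    (hρmono : AntitoneOn ρ₁ (Ici 0))
    (hvolt : ∀ t > (0:ℝ), ρ₁ t + μ * ∫ s in (0:ℝ)..t, ℓ (t - s) * ρ₁ s = 1) :
    ∀ t > (0:ℝ), ρ₁ t ≤ 1 / (1 + μ * ∫ τ in (0:ℝ)..t, ℓ τ) := by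
  intro t ht
  by_cases hI : IntervalIntegrable ℓ volume 0 t
  swap
  · simp [integral_undef hI, hρ1 t]
  have hh0 : 0 ≤ ∫ τ in (0:ℝ)..t, ℓ τ := by
    simpa using integral_mono_on_of_le_Ioo ht.le intervalIntegrable_const hI
      fun s hs => hℓ0 s hs.1
  have hreflect : ∫ s in (0:ℝ)..t, ℓ (t - s) = ∫ τ in (0:ℝ)..t, ℓ τ := by
    rw [integral_comp_sub_left ℓ t, sub_self, sub_zero]
  have hmemory : ρ₁ t * ∫ τ in (0:ℝ)..t, ℓ τ ≤ ∫ s in (0:ℝ)..t, ℓ (t - s) * ρ₁ s := by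
    rw [← hreflect]
    exact mul_integral_le_integral_mul_of_antitoneOn ht.le
      (by simpa using (hI.comp_sub_left t).symm) (fun s hs => hℓ0 _ (sub_pos.2 hs.2))
      (hρmono.mono Icc_subset_Ici_self)
  rw [le_div_iff₀ (by positivity)]
  calc ρ₁ t * (1 + μ * ∫ τ in (0:ℝ)..t, ℓ τ)
      = ρ₁ t + μ * (ρ₁ t * ∫ τ in (0:ℝ)..t, ℓ τ) := by ring
    _ ≤ ρ₁ t + μ * ∫ s in (0:ℝ)..t, ℓ (t - s) * ρ₁ s := by gcongr
    _ = 1 := hvolt t ht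

theorem stmt3 (ℓ ρ₁ : ℝ → ℝ) (μ : ℝ) (hμ : 0 < μ)
    (hℓint : LocallyIntegrableOn ℓ (Ioi 0))
    (hℓ0 : ∀ t ∈ Ioi (0:ℝ), 0 ≤ ℓ t)
    (hρ0 : ∀ t, 0 ≤ ρ₁ t) (hρ1 : ∀ t, ρ₁ t ≤ 1)
    (hρmono : AntitoneOn ρ₁ (Ici 0))
    (hvolt : ∀ t > (0:ℝ), ρ₁ t + μ * ∫ s in (0:ℝ)..t, ℓ (t - s) * ρ₁ s = 1) :
    ∀ t > (0:ℝ), ρ₁ t ≤ 1 / (1 + μ * ∫ τ in (0:ℝ)..t, ℓ τ) :=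
  stmt3_general ℓ ρ₁ μ hμ hℓ0 hρ1 hρmono hvolt
end

section
/- Let ℓ be nonnegative, nonincreasing and locally integrable on (0,∞), μ > 0, and let ρ₁ solve ρ₁ + μ (ℓ ⋆ ρ₁) = 1 with ρ₁(0) = 1, ρ₁ nonincreasing and absolutely continuous. Define ρ₂(t) = ∂_t (ℓ ⋆ ρ₁)(t). Then ρ₂(t) ≤ ℓ(t) ρ₁(t) for all t > 0. -/
/-!
Write `J = causalConv ℓ ρ₁ = ℓ ⋆ ρ₁`, so that `ρ₁ + μ J = 1` on `(0, ∞)`. Splitting the kernel as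
`ℓ = ℓ t + (ℓ - ℓ t)`, where `ℓ - ℓ t` is nonnegative before `t` and nonpositive after it, and
using that `ρ₁` is nonincreasing and nonnegative, one gets
`J (t + h) - J t ≤ ℓ t * ∫_t^{t+h} ρ₁ ≤ h * ℓ t * ρ₁ t` for `h > 0`, which bounds the derivative.

Nonnegativity of `ρ₁` comes from the equation: if `ρ₁ t < 0`, then in `J T = ∫₀^T ℓ x ρ₁ (T - x) dx`
the weight `ℓ x` is larger on `(0, T - t)`, where `ρ₁ (T - x) ≤ ρ₁ t`, than on `(T - t, T)`, where
`ρ₁ (T - x) ≤ 1`; for `T` large this gives `J T ≤ 0`, hence `ρ₁ T + μ J T < 1`.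

The splitting needs `ℓ` to be integrable at `0`. If it is not, the equation forces `ρ₁` to take
only the values `0` and `1`. A jump from `1` to `0` at `d > 0` would give `∫_ε^d ℓ ≤ 1 / μ` for all
`ε > 0`, and `ρ₁ = 0` on all of `(0, ∞)` would give `J = 0` there. Hence `ρ₁ = 1` and `J = 0` on
`(0, ∞)`, and the bound is trivial.
-/

open MeasureTheory Set intervalIntegral Filter

noncomputable def causalConv (k ρ : ℝ → ℝ) (t : ℝ) : ℝ :=
  ∫ s in (0:ℝ)..t, k (t - s) * ρ s

lemma causalConv_eq_integral (k ρ : ℝ → ℝ) (t : ℝ) :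
    causalConv k ρ t = ∫ x in (0:ℝ)..t, k x * ρ (t - x) := by
  unfold causalConv
  simpa using integral_comp_sub_left (fun x => k x * ρ (t - x)) t (a := 0) (b := t)

lemma causalConv_congr_of_eqOn {k ρ ρ' : ℝ → ℝ} {t : ℝ} (ht : 0 ≤ t)
    (h : EqOn ρ ρ' (Icc 0 t)) : causalConv k ρ t = causalConv k ρ' t :=
  integral_congr fun s hs => by rw [uIcc_of_le ht] at hs; simp only [h hs]

lemma intervalIntegrable_of_causalConv_ne_zero {k ρ : ℝ → ℝ} {c : ℝ}
    (h : causalConv k ρ c ≠ 0) : IntervalIntegrable (fun x => k x * ρ (c - x)) volume 0 c := by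
  by_contra hi
  rw [causalConv_eq_integral, integral_undef hi] at h
  exact h rfl

lemma IntervalIntegrable.mul_comp_sub_of_antitone {k ρ : ℝ → ℝ} {c : ℝ} (hc : 0 ≤ c)
    (hk : IntervalIntegrable k volume 0 c) (hρ : Antitone ρ) :
    IntervalIntegrable (fun x => k x * ρ (c - x)) volume 0 c := by
  rw [intervalIntegrable_iff_integrableOn_Ioc_of_le hc] at hk ⊢
  refine hk.mul_bdd (c := max |ρ c| |ρ 0|)
    (hρ.measurable.comp (measurable_const.sub measurable_id)).aestronglyMeasurable ?_
  filter_upwards [ae_restrict_mem measurableSet_Ioc] with x hx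
  exact abs_le_max_abs_abs (hρ (by linarith [hx.1])) (hρ (by linarith [hx.2]))

lemma causalConv_sub_const {k ρ : ℝ → ℝ} {c : ℝ} (hc : 0 ≤ c) (a : ℝ)
    (hk : IntervalIntegrable k volume 0 c) (hρ : Antitone ρ) :
    causalConv (fun x => k x - a) ρ c = causalConv k ρ c - a * ∫ s in (0:ℝ)..c, ρ s := by
  rw [causalConv_eq_integral, causalConv_eq_integral]
  simp_rw [sub_mul]
  rw [integral_sub (hk.mul_comp_sub_of_antitone hc hρ)
    (intervalIntegrable_const.mul_comp_sub_of_antitone hc hρ), intervalIntegral.integral_const_mul]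
  simp

lemma causalConv_add_le_of_sign_change {k ρ : ℝ → ℝ} (hρ : Antitone ρ)
    (hρnn : ∀ s ≥ 0, 0 ≤ ρ s) {t h : ℝ} (ht : 0 ≤ t) (hh : 0 ≤ h)
    (hk : IntervalIntegrable k volume 0 (t + h)) (hk_pos : ∀ x ∈ Ioo 0 t, 0 ≤ k x)
    (hk_neg : ∀ x ∈ Ioo t (t + h), k x ≤ 0) : causalConv k ρ (t + h) ≤ causalConv k ρ t := by
  rw [causalConv_eq_integral, causalConv_eq_integral]
  have hi := hk.mul_comp_sub_of_antitone (by linarith) hρ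
  have htm : t ∈ uIcc 0 (t + h) := mem_uIcc_of_le ht (by linarith)
  have hnear : ∫ x in (0:ℝ)..t, k x * ρ (t + h - x) ≤ ∫ x in (0:ℝ)..t, k x * ρ (t - x) :=
    integral_mono_on_of_le_Ioo ht (hi.mono_set (uIcc_subset_uIcc_left htm))
      ((hk.mono_set (uIcc_subset_uIcc_left htm)).mul_comp_sub_of_antitone ht hρ)
      fun x hx => mul_le_mul_of_nonneg_left (hρ (by linarith)) (hk_pos x hx)
  have hfar : ∫ x in t..(t + h), k x * ρ (t + h - x) ≤ ∫ _ in t..(t + h), (0:ℝ) :=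
    integral_mono_on_of_le_Ioo (by linarith) (hi.mono_set (uIcc_subset_uIcc_right htm))
      intervalIntegrable_const
      fun x hx => mul_nonpos_of_nonpos_of_nonneg (hk_neg x hx) (hρnn _ (by linarith [hx.2]))
  rw [← integral_add_adjacent_intervals (hi.mono_set (uIcc_subset_uIcc_left htm))
    (hi.mono_set (uIcc_subset_uIcc_right htm))]
  rw [intervalIntegral.integral_zero] at hfar
  linarith

lemma deriv_le_of_forall_sub_le {f : ℝ → ℝ} {t C : ℝ} (hC : 0 ≤ C)
    (hf : ∀ h > 0, f (t + h) - f t ≤ h * C) : deriv f t ≤ C := by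
  by_cases hd : DifferentiableAt ℝ f t
  · refine le_of_tendsto hd.hasDerivAt.tendsto_slope_zero_right ?_
    filter_upwards [self_mem_nhdsWithin] with h (hh : 0 < h)
    rw [smul_eq_mul, inv_mul_le_iff₀ hh]
    exact hf h hh
  · rw [deriv_zero_of_not_differentiableAt hd]
    exact hC

section Volterra

variable {ℓ ρ : ℝ → ℝ} {μ : ℝ}

lemma AntitoneOn.intervalIntegrable_of_pos (hℓ : AntitoneOn ℓ (Ioi 0)) {a b : ℝ}
    (ha : 0 < a) (hb : 0 < b) : IntervalIntegrable ℓ volume a b :=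
  (hℓ.mono fun _ hx => lt_of_lt_of_le (lt_min ha hb) hx.1).intervalIntegrable

lemma AntitoneOn.intervalIntegrable_zero_of_pos (hℓ : AntitoneOn ℓ (Ioi 0)) {c c' : ℝ}
    (hc : 0 < c) (hc' : 0 < c') (h : IntervalIntegrable ℓ volume 0 c) :
    IntervalIntegrable ℓ volume 0 c' :=
  h.trans (hℓ.intervalIntegrable_of_pos hc hc')

lemma causalConv_nonpos (hℓ0 : ∀ x ∈ Ioi (0:ℝ), 0 ≤ ℓ x) (hℓ : AntitoneOn ℓ (Ioi 0))
    (hρ : Antitone ρ) (hρ0 : ρ 0 ≤ 1) {t T : ℝ} (ht : 0 < t) (htT : t < T)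
    (hneg : ρ t ≤ 0) (hT : t ≤ -ρ t * (T - t)) : causalConv ℓ ρ T ≤ 0 := by
  rw [causalConv_eq_integral]
  by_cases hi : IntervalIntegrable (fun x => ℓ x * ρ (T - x)) volume 0 T
  swap
  · rw [integral_undef hi]
  set r := T - t
  have hr : 0 < r := sub_pos.2 htT
  have hrT : r ∈ uIcc 0 T := mem_uIcc_of_le hr.le (by linarith)
  have hnear : ∫ x in (0:ℝ)..r, ℓ x * ρ (T - x) ≤ ∫ _ in (0:ℝ)..r, ℓ r * ρ t := by
    refine integral_mono_on_of_le_Ioo hr.le (hi.mono_set (uIcc_subset_uIcc_left hrT))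
      intervalIntegrable_const fun x hx => ?_
    calc ℓ x * ρ (T - x) ≤ ℓ x * ρ t := mul_le_mul_of_nonneg_left (hρ (by linarith [hx.2]))
          (hℓ0 x hx.1)
      _ ≤ ℓ r * ρ t := mul_le_mul_of_nonpos_right (hℓ hx.1 hr hx.2.le) hneg
  have hfar : ∫ x in r..T, ℓ x * ρ (T - x) ≤ ∫ _ in r..T, ℓ r := by
    refine integral_mono_on_of_le_Ioo (by linarith) (hi.mono_set (uIcc_subset_uIcc_right hrT))
      intervalIntegrable_const fun x hx => ?_
    have hx0 : 0 < x := hr.trans hx.1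
    calc ℓ x * ρ (T - x) ≤ ℓ x * 1 :=
          mul_le_mul_of_nonneg_left ((hρ (by linarith [hx.2])).trans hρ0) (hℓ0 x hx0)
      _ ≤ ℓ r := by simpa using hℓ hr hx0 hx.1.le
  rw [← integral_add_adjacent_intervals (hi.mono_set (uIcc_subset_uIcc_left hrT))
    (hi.mono_set (uIcc_subset_uIcc_right hrT))]
  simp only [intervalIntegral.integral_const, smul_eq_mul, sub_zero] at hnear hfar
  nlinarith [mul_nonneg (hℓ0 r hr) (by linarith : 0 ≤ -ρ t * r - t)]

lemma nonneg_of_volterra (hμ : 0 < μ) (hℓ0 : ∀ x ∈ Ioi (0:ℝ), 0 ≤ ℓ x)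
    (hℓ : AntitoneOn ℓ (Ioi 0)) (hρ : Antitone ρ) (hρ0 : ρ 0 = 1)
    (hvolt : ∀ t > (0:ℝ), ρ t + μ * causalConv ℓ ρ t = 1) {t : ℝ} (ht : 0 ≤ t) :
    0 ≤ ρ t := by
  by_contra! hneg
  have ht : 0 < t := ht.lt_of_ne (by rintro rfl; linarith)
  set T := t + t / -ρ t
  have htT : t < T := lt_add_of_pos_right t (div_pos ht (neg_pos.2 hneg))
  have hT : t ≤ -ρ t * (T - t) := by
    rw [add_sub_cancel_left, mul_div_cancel₀ _ (neg_ne_zero.2 hneg.ne)]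
  have hconv := causalConv_nonpos hℓ0 hℓ hρ hρ0.le ht htT hneg.le hT
  have hρT : ρ T ≤ ρ t := hρ htT.le
  nlinarith [hvolt T (ht.trans htT)]

lemma causalConv_add_sub_le_of_intervalIntegrable (hℓ : AntitoneOn ℓ (Ioi 0))
    (hρ : Antitone ρ) (hρnn : ∀ s ≥ 0, 0 ≤ ρ s) {t h : ℝ} (ht : 0 < t) (hh : 0 ≤ h)
    (hℓt : 0 ≤ ℓ t) (hℓint : IntervalIntegrable ℓ volume 0 (t + h)) :
    causalConv ℓ ρ (t + h) - causalConv ℓ ρ t ≤ h * (ℓ t * ρ t) := by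
  have htm : t ∈ uIcc 0 (t + h) := mem_uIcc_of_le ht.le (by linarith)
  have hK := causalConv_add_le_of_sign_change (k := fun x => ℓ x - ℓ t) hρ hρnn ht.le hh
    (hℓint.sub intervalIntegrable_const) (fun x hx => sub_nonneg.2 (hℓ hx.1 ht hx.2.le))
    (fun x hx => sub_nonpos.2 (hℓ ht (ht.trans hx.1) hx.1.le))
  rw [causalConv_sub_const (by linarith) _ hℓint hρ,
    causalConv_sub_const ht.le _ (hℓint.mono_set (uIcc_subset_uIcc_left htm)) hρ] at hK
  have hρint : (∫ s in (0:ℝ)..(t + h), ρ s) - ∫ s in (0:ℝ)..t, ρ s ≤ h * ρ t := by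
    rw [integral_interval_sub_left hρ.intervalIntegrable hρ.intervalIntegrable]
    simpa using integral_mono_on (μ := volume) (le_add_of_nonneg_right hh)
      hρ.intervalIntegrable intervalIntegrable_const fun x hx => hρ hx.1
  nlinarith [mul_le_mul_of_nonneg_left hρint hℓt]

lemma intervalIntegrable_of_mul_comp_sub (hℓ0 : ∀ x ∈ Ioi (0:ℝ), 0 ≤ ℓ x)
    (hℓ : AntitoneOn ℓ (Ioi 0)) (hρ : Antitone ρ) {c : ℝ} (hc : 0 < c) (hpos : 0 < ρ c)
    (hf : IntervalIntegrable (fun x => ℓ x * ρ (c - x)) volume 0 c) :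
    IntervalIntegrable ℓ volume 0 c := by
  refine (hf.const_mul (ρ c)⁻¹).mono_fun' ?_ ?_ <;> rw [uIoc_of_le hc.le]
  · exact (aemeasurable_restrict_of_antitoneOn measurableSet_Ioc
      (hℓ.mono Ioc_subset_Ioi_self)).aestronglyMeasurable
  · filter_upwards [ae_restrict_mem measurableSet_Ioc] with x hx
    rw [Real.norm_of_nonneg (hℓ0 x hx.1), inv_mul_eq_div, le_div_iff₀ hpos]
    exact mul_le_mul_of_nonneg_left (hρ (by linarith [hx.1])) (hℓ0 x hx.1)

lemma intervalIntegrable_of_eq_one_on_Ioo (hμ : 0 < μ) (hℓ0 : ∀ x ∈ Ioi (0:ℝ), 0 ≤ ℓ x)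
    (hℓ : AntitoneOn ℓ (Ioi 0)) (hρnn : ∀ s ≥ 0, 0 ≤ ρ s)
    (hvolt : ∀ t > (0:ℝ), ρ t + μ * causalConv ℓ ρ t = 1) {d : ℝ} (hd : 0 < d)
    (hbefore : ∀ c ∈ Ioo 0 d, ρ c = 1) (hafter : ∀ c > d, ρ c ≠ 1) :
    IntervalIntegrable ℓ volume 0 d := by
  have hbound : ∀ ε > 0, ε ≤ d → ∫ x in Ioc ε d, ‖ℓ x‖ ≤ 1 / μ := by
    intro ε hε hεd
    set c := d + ε
    have hc : 0 < c := by positivity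
    have hvolt_c := hvolt c hc
    have hi : IntervalIntegrable (fun x => ℓ x * ρ (c - x)) volume 0 c :=
      intervalIntegrable_of_causalConv_ne_zero fun h0 =>
        hafter c (by linarith) (by rw [h0] at hvolt_c; linarith)
    have hεc : ε ∈ uIcc 0 c := mem_uIcc_of_le hε.le (by linarith)
    have hdc : d ∈ uIcc 0 c := mem_uIcc_of_le hd.le (by linarith)
    rw [setIntegral_congr_fun measurableSet_Ioc fun x hx => Real.norm_of_nonneg
      (hℓ0 x (hε.trans hx.1)), ← integral_of_le hεd]
    calc ∫ x in ε..d, ℓ x ≤ ∫ x in ε..d, ℓ x * ρ (c - x) :=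
          integral_mono_on_of_le_Ioo hεd (hℓ.intervalIntegrable_of_pos hε hd)
            (hi.mono_set (uIcc_subset_uIcc hεc hdc)) fun x hx => by
              rw [hbefore (c - x) ⟨by linarith [hx.2], by linarith [hx.1]⟩, mul_one]
      _ ≤ ∫ x in (0:ℝ)..c, ℓ x * ρ (c - x) := by
          refine integral_mono_interval hε.le hεd (by linarith) ?_ hi
          filter_upwards [ae_restrict_mem measurableSet_Ioc] with x hx
          exact mul_nonneg (hℓ0 x hx.1) (hρnn _ (by linarith [hx.2]))
      _ ≤ 1 / μ := by
          rw [← causalConv_eq_integral, le_div_iff₀ hμ]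
          nlinarith [hρnn c hc.le]
  rw [intervalIntegrable_iff_integrableOn_Ioc_of_le hd.le]
  refine integrableOn_Ioc_of_intervalIntegral_norm_bounded_left (l := atTop)
    (a := fun n : ℕ => d * (1 / (n + 1))) (fun n => (hℓ.intervalIntegrable_of_pos
      (by positivity) hd).1) (by simpa using tendsto_one_div_add_atTop_nhds_zero_nat.const_mul d)
    (Eventually.of_forall fun n => hbound _ (by positivity) ?_)
  exact mul_le_of_le_one_right hd.le (div_le_one_of_le₀ (by linarith [n.cast_nonneg (α := ℝ)])
    (by positivity))

lemma eq_one_of_not_intervalIntegrable (hμ : 0 < μ) (hℓ0 : ∀ x ∈ Ioi (0:ℝ), 0 ≤ ℓ x)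
    (hℓ : AntitoneOn ℓ (Ioi 0)) (hρ : Antitone ρ) (hρ0 : ρ 0 = 1)
    (hvolt : ∀ t > (0:ℝ), ρ t + μ * causalConv ℓ ρ t = 1)
    (hB : ¬ IntervalIntegrable ℓ volume 0 1) {t : ℝ} (ht : 0 < t) : ρ t = 1 := by
  have hρnn : ∀ s ≥ 0, 0 ≤ ρ s := fun s hs => nonneg_of_volterra hμ hℓ0 hℓ hρ hρ0 hvolt hs
  have hB' : ∀ c > 0, ¬ IntervalIntegrable ℓ volume 0 c := fun c hc h =>
    hB (hℓ.intervalIntegrable_zero_of_pos hc one_pos h)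
  -- a value of `ρ` in `(0, 1)` would make `ℓ` integrable near `0`
  have hdich : ∀ c > 0, ρ c ≠ 1 → ρ c = 0 := by
    intro c hc h1
    have hvolt_c := hvolt c hc
    refine le_antisymm (not_lt.1 fun hpos => hB' c hc ?_) (hρnn c hc.le)
    exact intervalIntegrable_of_mul_comp_sub hℓ0 hℓ hρ hc hpos
      (intervalIntegrable_of_causalConv_ne_zero fun h0 => h1 (by rw [h0] at hvolt_c; linarith))
  by_contra h1
  set S := {c : ℝ | 0 < c ∧ ρ c ≠ 1}
  have hS : S.Nonempty := ⟨t, ht, h1⟩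
  have hd : 0 ≤ sInf S := le_csInf hS fun c hc => hc.1.le
  have hafter : ∀ c > sInf S, ρ c ≠ 1 := by
    intro c hc
    obtain ⟨c', hc', hc'c⟩ := exists_lt_of_csInf_lt hS hc
    have := hρ hc'c.le
    rw [hdich c' hc'.1 hc'.2] at this
    linarith
  rcases hd.eq_or_lt with hd0 | hdpos
  · have hconv : causalConv ℓ ρ 1 = 0 := by
      unfold causalConv
      rw [integral_congr_ae (g := fun _ => 0) (ae_of_all _ fun s hs => ?_),
        intervalIntegral.integral_zero]
      rw [uIoc_of_le zero_le_one] at hs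
      rw [hdich s hs.1 (hafter s (hd0 ▸ hs.1)), mul_zero]
    have := hvolt 1 one_pos
    rw [hconv, hdich 1 one_pos (hafter 1 (hd0 ▸ one_pos))] at this
    norm_num at this
  · refine hB' _ hdpos (intervalIntegrable_of_eq_one_on_Ioo hμ hℓ0 hℓ hρnn hvolt hdpos ?_ hafter)
    exact fun c hc => not_not.1 fun h => (not_le.2 hc.2) (csInf_le ⟨0, fun _ h => h.1.le⟩ ⟨hc.1, h⟩)

lemma causalConv_add_sub_le_of_volterra (hμ : 0 < μ) (hℓ0 : ∀ x ∈ Ioi (0:ℝ), 0 ≤ ℓ x)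
    (hℓ : AntitoneOn ℓ (Ioi 0)) (hρ : Antitone ρ) (hρ0 : ρ 0 = 1)
    (hvolt : ∀ t > (0:ℝ), ρ t + μ * causalConv ℓ ρ t = 1) {t h : ℝ} (ht : 0 < t) (hh : 0 ≤ h) :
    causalConv ℓ ρ (t + h) - causalConv ℓ ρ t ≤ h * (ℓ t * ρ t) := by
  have hρnn : ∀ s ≥ 0, 0 ≤ ρ s := fun s hs => nonneg_of_volterra hμ hℓ0 hℓ hρ hρ0 hvolt hs
  by_cases hA : IntervalIntegrable ℓ volume 0 1
  · exact causalConv_add_sub_le_of_intervalIntegrable hℓ hρ hρnn ht hh (hℓ0 t ht)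
      (hℓ.intervalIntegrable_zero_of_pos one_pos (by linarith) hA)
  · have hzero : ∀ r > 0, causalConv ℓ ρ r = 0 := fun r hr => by
      have := hvolt r hr
      rw [eq_one_of_not_intervalIntegrable hμ hℓ0 hℓ hρ hρ0 hvolt hA hr] at this
      exact (mul_eq_zero.1 (by linarith)).resolve_left hμ.ne'
    rw [hzero _ (by linarith), hzero t ht, sub_zero]
    exact mul_nonneg hh (mul_nonneg (hℓ0 t ht) (hρnn t ht.le))

end Volterra

theorem stmt4_general (ℓ ρ₁ ρ₂ : ℝ → ℝ) (μ : ℝ) (hμ : 0 < μ)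
    (hℓ0 : ∀ t ∈ Ioi (0:ℝ), 0 ≤ ℓ t)
    (hℓmono : AntitoneOn ℓ (Ioi 0))
    (hρ₁0 : ρ₁ 0 = 1)
    (hρmono : AntitoneOn ρ₁ (Ici 0))
    (hvolt : ∀ t > (0:ℝ), ρ₁ t + μ * ∫ s in (0:ℝ)..t, ℓ (t - s) * ρ₁ s = 1)
    (hρ₂ : ∀ t, ρ₂ t = deriv (fun r => ∫ s in (0:ℝ)..r, ℓ (r - s) * ρ₁ s) t) :
    ∀ t > (0:ℝ), ρ₂ t ≤ ℓ t * ρ₁ t := by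
  intro t ht
  set ρ : ℝ → ℝ := fun s => ρ₁ (max s 0)
  have hρ : Antitone ρ := fun a b hab =>
    hρmono (le_max_right a 0) (le_max_right b 0) (max_le_max_right 0 hab)
  have hρ_eq : ∀ s ≥ 0, ρ s = ρ₁ s := fun s hs => congrArg ρ₁ (max_eq_left hs)
  have hρ0 : ρ 0 = 1 := (hρ_eq 0 le_rfl).trans hρ₁0
  have hconv : ∀ r ≥ 0, causalConv ℓ ρ r = causalConv ℓ ρ₁ r := fun r hr =>
    causalConv_congr_of_eqOn hr fun s hs => hρ_eq s hs.1
  have hvolt' : ∀ r > (0:ℝ), ρ r + μ * causalConv ℓ ρ r = 1 := fun r hr => by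
    rw [hρ_eq r hr.le, hconv r hr.le]
    exact hvolt r hr
  have hderiv : deriv (causalConv ℓ ρ₁) t = deriv (causalConv ℓ ρ) t :=
    (eventuallyEq_of_mem (Ioi_mem_nhds ht) fun r hr => (hconv r (le_of_lt hr)).symm).deriv_eq
  rw [hρ₂ t, ← hρ_eq t ht.le]
  change deriv (causalConv ℓ ρ₁) t ≤ _
  rw [hderiv]
  exact deriv_le_of_forall_sub_le
    (mul_nonneg (hℓ0 t ht) (nonneg_of_volterra hμ hℓ0 hℓmono hρ hρ0 hvolt' ht.le))
    fun h hh => causalConv_add_sub_le_of_volterra hμ hℓ0 hℓmono hρ hρ0 hvolt' ht hh.le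

theorem stmt4 (ℓ ρ₁ ρ₂ : ℝ → ℝ) (μ : ℝ) (hμ : 0 < μ)
    (hℓint : LocallyIntegrableOn ℓ (Ioi 0))
    (hℓ0 : ∀ t ∈ Ioi (0:ℝ), 0 ≤ ℓ t)
    (hℓmono : AntitoneOn ℓ (Ioi 0))
    (hρ₁0 : ρ₁ 0 = 1)
    (hρmono : AntitoneOn ρ₁ (Ici 0))
    (hρac : ∀ T > (0:ℝ), IntegrableOn (deriv ρ₁) (Ioc 0 T))
    (hvolt : ∀ t > (0:ℝ), ρ₁ t + μ * ∫ s in (0:ℝ)..t, ℓ (t - s) * ρ₁ s = 1)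
    (hρ₂ : ∀ t, ρ₂ t = deriv (fun r => ∫ s in (0:ℝ)..r, ℓ (r - s) * ρ₁ s) t) :
    ∀ t > (0:ℝ), ρ₂ t ≤ ℓ t * ρ₁ t :=
  stmt4_general ℓ ρ₁ ρ₂ μ hμ hℓ0 hℓmono hρ₁0 hρmono hvolt hρ₂
end

section
/- Let φ ∈ C²(ℝᴺ) ∩ L¹(ℝᴺ) be positive, radially symmetric, nonincreasing in |x|, with |D²φ(x)| ≤ c|x|^{−2} φ(x), and let ℒ be the Lévy operator ℒφ(x) = P.V.∫(φ(x)−φ(z))𝒥(x−z)dz with 𝒥 a nonnegative radial Lévy kernel nonincreasing near infinity. Then ℒφ ∈ L^∞(ℝᴺ), and there exist R, C > 0 such that |ℒφ(x)| ≤ C (φ(x/2) + 𝒥(x/2)) for all |x| ≥ R. -/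
open MeasureTheory Set Filter Topology Metric

/-!
After the substitution `z = x - y` the truncated integrals are `∫_{‖y‖ > ε} (φ x - φ (x - y)) J y`.
On the annulus `ε < ‖y‖ < 1` the evenness of `J` replaces the integrand by half the second
difference `2 φ x - φ (x - y) - φ (x + y)`, which the mean value inequality bounds by
`2 K ‖y‖²` with `K` a bound for `D²φ` on the unit ball around `x`. Hence the principal value is
at most `K ∫ min 1 ‖y‖² J` plus the modulus of the tail integral over `‖y‖ ≥ 1`, uniformly in `ε`.
The Hessian hypothesis makes `D²φ` globally bounded, and bounded by `c φ (x / 2)` near `x` once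
`‖x‖ ≥ 2`. On the tail, `|φ x - φ (x - y)| J y ≤ φ (x / 2) J y + J (x / 2) φ (x - y)`: for
`‖y‖ < ‖x‖ / 2` both values of `φ` are at most `φ (x / 2)`, and otherwise `J y ≤ J (x / 2)` by
the monotonicity of `J` far out.
-/

section SecondDifference

variable {E F : Type*} [NormedAddCommGroup E] [NormedSpace ℝ E]
  [NormedAddCommGroup F] [NormedSpace ℝ F]

theorem norm_add_add_sub_two_smul_le {f : E → F} (hf : ContDiff ℝ 2 f) {x y : E} {K : ℝ}
    (hK : ∀ ξ ∈ closedBall x ‖y‖, ‖iteratedFDeriv ℝ 2 f ξ‖ ≤ K) :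
    ‖f (x + y) + f (x - y) - (2 : ℝ) • f x‖ ≤ 2 * K * ‖y‖ ^ 2 := by
  have hx : x ∈ closedBall x ‖y‖ := mem_closedBall_self (norm_nonneg y)
  have hK0 : 0 ≤ K := (norm_nonneg _).trans (hK x hx)
  have hdiff : Differentiable ℝ f := hf.differentiable (by norm_num)
  have hdiff' : Differentiable ℝ (fderiv ℝ f) :=
    (hf.fderiv_right (m := 1) (by norm_num)).differentiable (by norm_num)
  have hlip : ∀ ξ ∈ closedBall x ‖y‖, ‖fderiv ℝ f ξ - fderiv ℝ f x‖ ≤ K * ‖y‖ := by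
    intro ξ hξ
    calc ‖fderiv ℝ f ξ - fderiv ℝ f x‖ ≤ K * ‖ξ - x‖ :=
          (convex_closedBall x ‖y‖).norm_image_sub_le_of_norm_fderiv_le (fun a _ => hdiff' a)
            (fun a ha => by
              rw [← norm_iteratedFDeriv_one (𝕜 := ℝ), norm_iteratedFDeriv_fderiv]
              exact hK a ha) hx hξ
      _ ≤ K * ‖y‖ := by gcongr; rwa [← dist_eq_norm, ← mem_closedBall]
  have taylor : ∀ v : E, ‖v‖ = ‖y‖ →
      ‖f (x + v) - f x - fderiv ℝ f x v‖ ≤ K * ‖y‖ * ‖y‖ := by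
    intro v hv
    have hxv : x + v ∈ closedBall x ‖y‖ := by simp [hv]
    simpa [hv] using (convex_closedBall x ‖y‖).norm_image_sub_le_of_norm_fderiv_le'
      (fun a _ => hdiff a) hlip hx hxv
  calc ‖f (x + y) + f (x - y) - (2 : ℝ) • f x‖
      = ‖(f (x + y) - f x - fderiv ℝ f x y) + (f (x + -y) - f x - fderiv ℝ f x (-y))‖ := by
        rw [map_neg, ← sub_eq_add_neg, two_smul]; congr 1; abel
    _ ≤ K * ‖y‖ * ‖y‖ + K * ‖y‖ * ‖y‖ :=
        (norm_add_le _ _).trans (add_le_add (taylor y rfl) (taylor (-y) (norm_neg y)))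
    _ = 2 * K * ‖y‖ ^ 2 := by ring

end SecondDifference

section HalfScale

variable {E : Type*} [NormedAddCommGroup E] [NormedSpace ℝ E] {J φ : E → ℝ}

theorem norm_half_smul (x : E) : ‖(1 / 2 : ℝ) • x‖ = ‖x‖ / 2 := by
  rw [norm_smul_of_nonneg (by norm_num)]
  ring

theorem abs_sub_mul_le_of_two_mul_le_norm (hφ0 : ∀ x, 0 ≤ φ x)
    (hφrad : ∀ x y, ‖x‖ ≤ ‖y‖ → φ y ≤ φ x) (hJ0 : ∀ y, 0 ≤ J y) {R₀ : ℝ}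
    (hJmono : ∀ z w, R₀ ≤ ‖z‖ → ‖z‖ ≤ ‖w‖ → J w ≤ J z) {x : E} (hx : 2 * R₀ ≤ ‖x‖) (y : E) :
    |φ x - φ (x - y)| * J y ≤
      φ ((1 / 2 : ℝ) • x) * J y + J ((1 / 2 : ℝ) • x) * φ (x - y) := by
  have hφx : φ x ≤ φ ((1 / 2 : ℝ) • x) :=
    hφrad _ _ (by rw [norm_half_smul]; linarith [norm_nonneg x])
  rcases lt_or_ge ‖y‖ (‖x‖ / 2) with hy | hy
  · have hφxy : φ (x - y) ≤ φ ((1 / 2 : ℝ) • x) :=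
      hφrad _ _ (by rw [norm_half_smul]; linarith [norm_sub_norm_le x y])
    have habs : |φ x - φ (x - y)| ≤ φ ((1 / 2 : ℝ) • x) :=
      abs_sub_le_iff.2 ⟨by linarith [hφ0 (x - y)], by linarith [hφ0 x]⟩
    exact (mul_le_mul_of_nonneg_right habs (hJ0 y)).trans
      (le_add_of_nonneg_right (mul_nonneg (hJ0 _) (hφ0 _)))
  · have hJy : J y ≤ J ((1 / 2 : ℝ) • x) :=
      hJmono _ _ (by rw [norm_half_smul]; linarith) (by rw [norm_half_smul]; exact hy)
    have habs : |φ x - φ (x - y)| ≤ φ x + φ (x - y) :=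
      abs_sub_le_iff.2 ⟨by linarith [hφ0 (x - y)], by linarith [hφ0 x]⟩
    calc |φ x - φ (x - y)| * J y ≤ φ x * J y + J y * φ (x - y) :=
          (mul_le_mul_of_nonneg_right habs (hJ0 y)).trans_eq (by ring)
      _ ≤ φ ((1 / 2 : ℝ) • x) * J y + J ((1 / 2 : ℝ) • x) * φ (x - y) := by
          gcongr
          · exact hJ0 y
          · exact hφ0 _

end HalfScale

section Hessian

variable {E : Type*} [NormedAddCommGroup E] [NormedSpace ℝ E] {φ : E → ℝ} {c : ℝ}

theorem norm_iteratedFDeriv_two_le_of_one_le_norm (hφ0 : ∀ x, 0 ≤ φ x)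
    (hφhess : ∀ x, x ≠ 0 → ‖iteratedFDeriv ℝ 2 φ x‖ ≤ c * ‖x‖ ^ (-2 : ℝ) * φ x) {ξ : E}
    (hξ : 1 ≤ ‖ξ‖) : ‖iteratedFDeriv ℝ 2 φ ξ‖ ≤ max c 0 * φ ξ := by
  have hr : ‖ξ‖ ^ (-2 : ℝ) ≤ 1 := Real.rpow_le_one_of_one_le_of_nonpos hξ (by norm_num)
  calc ‖iteratedFDeriv ℝ 2 φ ξ‖ ≤ c * ‖ξ‖ ^ (-2 : ℝ) * φ ξ :=
        hφhess ξ (norm_pos_iff.1 (one_pos.trans_le hξ))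
    _ ≤ max c 0 * ‖ξ‖ ^ (-2 : ℝ) * φ ξ := by gcongr; exacts [hφ0 ξ, le_max_left c 0]
    _ ≤ max c 0 * 1 * φ ξ := by gcongr; exact hφ0 ξ
    _ = max c 0 * φ ξ := by ring

theorem exists_forall_norm_iteratedFDeriv_two_le [ProperSpace E] (hφ : ContDiff ℝ 2 φ)
    (hφ0 : ∀ x, 0 ≤ φ x) (hφrad : ∀ x y, ‖x‖ ≤ ‖y‖ → φ y ≤ φ x)
    (hφhess : ∀ x, x ≠ 0 → ‖iteratedFDeriv ℝ 2 φ x‖ ≤ c * ‖x‖ ^ (-2 : ℝ) * φ x) :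
    ∃ K, ∀ ξ, ‖iteratedFDeriv ℝ 2 φ ξ‖ ≤ K := by
  obtain ⟨K₀, hK₀⟩ := (isCompact_closedBall (0 : E) 1).exists_bound_of_continuousOn
    (hφ.continuous_iteratedFDeriv le_rfl).continuousOn
  refine ⟨max K₀ (max c 0 * φ 0), fun ξ => ?_⟩
  rcases le_or_gt ‖ξ‖ 1 with h | h
  · exact (hK₀ ξ (mem_closedBall_zero_iff.2 h)).trans (le_max_left _ _)
  · calc ‖iteratedFDeriv ℝ 2 φ ξ‖ ≤ max c 0 * φ ξ :=
          norm_iteratedFDeriv_two_le_of_one_le_norm hφ0 hφhess h.le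
      _ ≤ max c 0 * φ 0 := by
          gcongr
          exact hφrad 0 ξ (by simp)
      _ ≤ max K₀ (max c 0 * φ 0) := le_max_right _ _

theorem norm_iteratedFDeriv_two_le_of_mem_closedBall (hφ0 : ∀ x, 0 ≤ φ x)
    (hφrad : ∀ x y, ‖x‖ ≤ ‖y‖ → φ y ≤ φ x)
    (hφhess : ∀ x, x ≠ 0 → ‖iteratedFDeriv ℝ 2 φ x‖ ≤ c * ‖x‖ ^ (-2 : ℝ) * φ x) {x ξ : E}
    (hx : 2 ≤ ‖x‖) (hξ : ξ ∈ closedBall x 1) :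
    ‖iteratedFDeriv ℝ 2 φ ξ‖ ≤ max c 0 * φ ((1 / 2 : ℝ) • x) := by
  have hξx : ‖x‖ / 2 ≤ ‖ξ‖ := by
    rw [mem_closedBall, dist_eq_norm] at hξ
    linarith [norm_sub_norm_le x ξ, norm_sub_rev x ξ]
  calc ‖iteratedFDeriv ℝ 2 φ ξ‖ ≤ max c 0 * φ ξ :=
        norm_iteratedFDeriv_two_le_of_one_le_norm hφ0 hφhess (by linarith)
    _ ≤ max c 0 * φ ((1 / 2 : ℝ) • x) := by
        gcongr
        exact hφrad _ _ (by rw [norm_half_smul]; exact hξx)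

end Hessian

section LevyKernel

variable {E : Type*} [NormedAddCommGroup E] [MeasurableSpace E] [BorelSpace E]
  {μ : Measure E} {J φ : E → ℝ}

theorem integrableOn_norm_ge_of_integrable_min_one_sq_mul
    (hlevy : Integrable (fun y => min 1 (‖y‖ ^ 2) * J y) μ) {a : ℝ} (ha : 0 < a) :
    IntegrableOn J {y | a ≤ ‖y‖} μ := by
  have hs : MeasurableSet {y : E | a ≤ ‖y‖} := measurableSet_le measurable_const measurable_norm
  have hm : ∀ y ∈ {y : E | a ≤ ‖y‖}, min 1 (a ^ 2) ≤ min 1 (‖y‖ ^ 2) := fun y hy =>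
    min_le_min le_rfl (pow_le_pow_left₀ ha.le hy 2)
  have hma : 0 < min 1 (a ^ 2) := lt_min one_pos (pow_pos ha 2)
  refine IntegrableOn.congr_fun (f := fun y => (min 1 (‖y‖ ^ 2))⁻¹ * (min 1 (‖y‖ ^ 2) * J y))
    (hlevy.integrableOn.bdd_mul (c := (min 1 (a ^ 2))⁻¹) (by fun_prop)
      ((ae_restrict_iff' hs).2 (ae_of_all _ fun y hy => ?_))) (fun y hy => ?_) hs
  · rw [norm_inv, Real.norm_of_nonneg (hma.trans_le (hm y hy)).le]
    exact inv_anti₀ hma (hm y hy)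
  · exact inv_mul_cancel_left₀ (hma.trans_le (hm y hy)).ne' (J y)

theorem integrableOn_mul_of_integrable_min_one_sq_mul
    (hlevy : Integrable (fun y => min 1 (‖y‖ ^ 2) * J y) μ) {a : ℝ} (ha : 0 < a)
    {g : E → ℝ} (hg : AEStronglyMeasurable g μ) {C : ℝ} (hC : ∀ y, |g y| ≤ C) :
    IntegrableOn (fun y => g y * J y) {y | a ≤ ‖y‖} μ :=
  (integrableOn_norm_ge_of_integrable_min_one_sq_mul hlevy ha).bdd_mul hg.restrict
    (ae_of_all _ hC)

theorem setIntegral_one_le_norm_le_integral_min_one_sq_mul (hJ0 : ∀ y, 0 ≤ J y)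
    (hlevy : Integrable (fun y => min 1 (‖y‖ ^ 2) * J y) μ) :
    ∫ y in {y | 1 ≤ ‖y‖}, J y ∂μ ≤ ∫ y, min 1 (‖y‖ ^ 2) * J y ∂μ := by
  have hs : MeasurableSet {y : E | 1 ≤ ‖y‖} := measurableSet_le measurable_const measurable_norm
  calc ∫ y in {y | 1 ≤ ‖y‖}, J y ∂μ = ∫ y in {y | 1 ≤ ‖y‖}, min 1 (‖y‖ ^ 2) * J y ∂μ :=
        setIntegral_congr_fun hs fun y (hy : 1 ≤ ‖y‖) => by
          rw [min_eq_left (one_le_pow₀ hy), one_mul]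
    _ ≤ _ := setIntegral_le_integral hlevy
        (ae_of_all _ fun y => mul_nonneg (le_min zero_le_one (sq_nonneg _)) (hJ0 y))

theorem setIntegral_lt_norm_sub_eq [μ.IsAddLeftInvariant] [μ.IsNegInvariant]
    (x : E) (ε : ℝ) (F : E → ℝ) :
    ∫ z in {z | ε < ‖x - z‖}, F z ∂μ = ∫ y in {y | ε < ‖y‖}, F (x - y) ∂μ := by
  rw [← (Measure.measurePreserving_sub_left μ x).setIntegral_preimage_emb
    (measurableEmbedding_subLeft x) F]
  simp

theorem setIntegral_comp_neg_of_neg_eq [μ.IsNegInvariant] {s : Set E} (hs : -s = s)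
    (F : E → ℝ) : ∫ y in s, F (-y) ∂μ = ∫ y in s, F y ∂μ := by
  conv_lhs => rw [← hs, ← Set.neg_preimage]
  exact (Measure.measurePreserving_neg μ).setIntegral_preimage_emb
    (MeasurableEquiv.neg E).measurableEmbedding F s

theorem setIntegral_lt_norm_eq_add {F : E → ℝ} {ε : ℝ} (hε : ε < 1)
    (hF : IntegrableOn F {y | ε ≤ ‖y‖} μ) :
    ∫ y in {y | ε < ‖y‖}, F y ∂μ =
      ∫ y in {y | ε < ‖y‖} ∩ {y | ‖y‖ < 1}, F y ∂μ + ∫ y in {y | 1 ≤ ‖y‖}, F y ∂μ := by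
  have hunion : {y : E | ε < ‖y‖} = ({y | ε < ‖y‖} ∩ {y | ‖y‖ < 1}) ∪ {y | 1 ≤ ‖y‖} := by
    ext y
    simp only [mem_ofPred_eq, mem_union, mem_inter_iff]
    constructor
    · intro h; by_cases h1 : ‖y‖ < 1 <;> simp_all
    · rintro (⟨h, -⟩ | h) <;> linarith
  conv_lhs => rw [hunion]
  exact setIntegral_union (disjoint_left.2 fun y hy (hy' : 1 ≤ ‖y‖) => hy.2.not_ge hy')
    (measurableSet_le measurable_const measurable_norm)
    (hF.mono_set fun y hy => show ε ≤ ‖y‖ from hy.1.le)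
    (hF.mono_set fun y (hy : 1 ≤ ‖y‖) => show ε ≤ ‖y‖ by linarith)

theorem integrableOn_sub_comp_sub_mul
    (hlevy : Integrable (fun y => min 1 (‖y‖ ^ 2) * J y) μ) (hφ : Continuous φ) {B : ℝ}
    (hB : ∀ x, |φ x| ≤ B) (x : E) {a : ℝ} (ha : 0 < a) :
    IntegrableOn (fun y => (φ x - φ (x - y)) * J y) {y | a ≤ ‖y‖} μ :=
  integrableOn_mul_of_integrable_min_one_sq_mul hlevy ha
    (by fun_prop : Continuous fun y => φ x - φ (x - y)).aestronglyMeasurable fun y =>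
    (abs_sub _ _).trans (add_le_add (hB x) (hB (x - y)))

theorem abs_setIntegral_annulus_le [NormedSpace ℝ E] [μ.IsNegInvariant] (hJ0 : ∀ y, 0 ≤ J y)
    (hJeven : ∀ y, J (-y) = J y) (hlevy : Integrable (fun y => min 1 (‖y‖ ^ 2) * J y) μ)
    (hφ : ContDiff ℝ 2 φ) {x : E} {K : ℝ}
    (hK : ∀ ξ ∈ closedBall x 1, ‖iteratedFDeriv ℝ 2 φ ξ‖ ≤ K) {ε : ℝ}
    (hD : IntegrableOn (fun y => (φ x - φ (x - y)) * J y) ({y | ε < ‖y‖} ∩ {y | ‖y‖ < 1}) μ) :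
    |∫ y in {y | ε < ‖y‖} ∩ {y | ‖y‖ < 1}, (φ x - φ (x - y)) * J y ∂μ| ≤
      K * ∫ y, min 1 (‖y‖ ^ 2) * J y ∂μ := by
  set S := {y : E | ε < ‖y‖} ∩ {y | ‖y‖ < 1}
  have hK0 : 0 ≤ K := (norm_nonneg _).trans (hK x (mem_closedBall_self zero_le_one))
  have hSm : MeasurableSet S :=
    (measurableSet_lt measurable_const measurable_norm).inter
      (measurableSet_lt measurable_norm measurable_const)
  have hSneg : -S = S := by ext y; simp [S]
  have hD' : IntegrableOn (fun y => (φ x - φ (x - -y)) * J (-y)) S μ := by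
    simpa [hSneg] using hD.comp_neg
  have hsym : ∫ y in S, (φ x - φ (x - y)) * J y ∂μ =
      (1 / 2) * ∫ y in S, ((φ x - φ (x - y)) * J y + (φ x - φ (x - -y)) * J (-y)) ∂μ := by
    rw [integral_add hD hD', setIntegral_comp_neg_of_neg_eq hSneg
      (fun y => (φ x - φ (x - y)) * J y)]
    ring
  have hpoint : ∀ y ∈ S, ‖(φ x - φ (x - y)) * J y + (φ x - φ (x - -y)) * J (-y)‖ ≤
      2 * K * (min 1 (‖y‖ ^ 2) * J y) := by
    rintro y ⟨-, hy1 : ‖y‖ < 1⟩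
    have hsecond := norm_add_add_sub_two_smul_le hφ (x := x) (y := y) fun ξ hξ =>
      hK ξ (closedBall_subset_closedBall hy1.le hξ)
    rw [hJeven, min_eq_right (pow_le_one₀ (norm_nonneg y) hy1.le), Real.norm_eq_abs,
      show (φ x - φ (x - y)) * J y + (φ x - φ (x - -y)) * J y =
        -((φ (x + y) + φ (x - y) - (2 : ℝ) • φ x) * J y) by rw [sub_neg_eq_add, smul_eq_mul]; ring,
      abs_neg, abs_mul, abs_of_nonneg (hJ0 y), ← mul_assoc]
    exact mul_le_mul_of_nonneg_right hsecond (hJ0 y)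
  calc |∫ y in S, (φ x - φ (x - y)) * J y ∂μ|
      ≤ (1 / 2) * ∫ y in S, 2 * K * (min 1 (‖y‖ ^ 2) * J y) ∂μ := by
        rw [hsym, abs_mul, abs_of_pos one_half_pos]
        gcongr
        exact norm_integral_le_of_norm_le (hlevy.const_mul _).integrableOn
          (ae_restrict_of_forall_mem hSm hpoint)
    _ ≤ (1 / 2) * ∫ y, 2 * K * (min 1 (‖y‖ ^ 2) * J y) ∂μ := by
        refine mul_le_mul_of_nonneg_left (setIntegral_le_integral (hlevy.const_mul _)
          (ae_of_all _ fun y => ?_)) one_half_pos.le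
        exact mul_nonneg (by positivity) (mul_nonneg (le_min zero_le_one (sq_nonneg _)) (hJ0 y))
    _ = K * ∫ y, min 1 (‖y‖ ^ 2) * J y ∂μ := by rw [integral_const_mul]; ring

theorem abs_le_of_tendsto_truncation [NormedSpace ℝ E] [μ.IsAddLeftInvariant] [μ.IsNegInvariant]
    (hJ0 : ∀ y, 0 ≤ J y) (hJeven : ∀ y, J (-y) = J y)
    (hlevy : Integrable (fun y => min 1 (‖y‖ ^ 2) * J y) μ) (hφ : ContDiff ℝ 2 φ) {B : ℝ}
    (hB : ∀ x, |φ x| ≤ B) {x : E} {K : ℝ}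
    (hK : ∀ ξ ∈ closedBall x 1, ‖iteratedFDeriv ℝ 2 φ ξ‖ ≤ K) {l : ℝ}
    (hl : Tendsto (fun ε : ℝ => ∫ z in {z | ε < ‖x - z‖}, (φ x - φ z) * J (x - z) ∂μ)
      (𝓝[>] 0) (𝓝 l)) :
    |l| ≤ K * (∫ y, min 1 (‖y‖ ^ 2) * J y ∂μ) +
      |∫ y in {y | 1 ≤ ‖y‖}, (φ x - φ (x - y)) * J y ∂μ| := by
  refine le_of_tendsto hl.abs ?_
  filter_upwards [Ioo_mem_nhdsGT one_pos] with ε ⟨hε0, hε1⟩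
  have hD := integrableOn_sub_comp_sub_mul (μ := μ) hlevy hφ.continuous hB x hε0
  rw [setIntegral_lt_norm_sub_eq, setIntegral_lt_norm_eq_add hε1
    (by simpa only [sub_sub_cancel] using hD)]
  simp only [sub_sub_cancel]
  exact (abs_add_le _ _).trans (add_le_add_left (abs_setIntegral_annulus_le hJ0 hJeven hlevy hφ
    hK (hD.mono_set fun y hy => show ε ≤ ‖y‖ from hy.1.le)) _)

theorem abs_setIntegral_one_le_norm_le_of_abs_le (hJ0 : ∀ y, 0 ≤ J y)
    (hlevy : Integrable (fun y => min 1 (‖y‖ ^ 2) * J y) μ) {B : ℝ} (hB : ∀ x, |φ x| ≤ B)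
    (x : E) :
    |∫ y in {y | 1 ≤ ‖y‖}, (φ x - φ (x - y)) * J y ∂μ| ≤
      2 * B * ∫ y, min 1 (‖y‖ ^ 2) * J y ∂μ := by
  have hB0 : 0 ≤ 2 * B := by linarith [(abs_nonneg _).trans (hB x)]
  have hpoint : ∀ y, ‖(φ x - φ (x - y)) * J y‖ ≤ 2 * B * J y := fun y => by
    rw [Real.norm_eq_abs, abs_mul, abs_of_nonneg (hJ0 y)]
    exact mul_le_mul_of_nonneg_right
      (by linarith [abs_sub (φ x) (φ (x - y)), hB x, hB (x - y)]) (hJ0 y)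
  calc |∫ y in {y | 1 ≤ ‖y‖}, (φ x - φ (x - y)) * J y ∂μ|
      ≤ ∫ y in {y | 1 ≤ ‖y‖}, 2 * B * J y ∂μ :=
        norm_integral_le_of_norm_le
          ((integrableOn_norm_ge_of_integrable_min_one_sq_mul hlevy one_pos).const_mul _)
          (ae_of_all _ hpoint)
    _ ≤ 2 * B * ∫ y, min 1 (‖y‖ ^ 2) * J y ∂μ := by
        rw [integral_const_mul]
        gcongr
        exact setIntegral_one_le_norm_le_integral_min_one_sq_mul hJ0 hlevy

theorem abs_setIntegral_one_le_norm_le_of_two_mul_le_norm [NormedSpace ℝ E]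
    [μ.IsAddLeftInvariant] [μ.IsNegInvariant] (hφint : Integrable φ μ) (hφ0 : ∀ x, 0 ≤ φ x)
    (hφrad : ∀ x y, ‖x‖ ≤ ‖y‖ → φ y ≤ φ x) (hJ0 : ∀ y, 0 ≤ J y)
    (hlevy : Integrable (fun y => min 1 (‖y‖ ^ 2) * J y) μ) {R₀ : ℝ}
    (hJmono : ∀ z w, R₀ ≤ ‖z‖ → ‖z‖ ≤ ‖w‖ → J w ≤ J z) {x : E} (hx : 2 * R₀ ≤ ‖x‖) :
    |∫ y in {y | 1 ≤ ‖y‖}, (φ x - φ (x - y)) * J y ∂μ| ≤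
      φ ((1 / 2 : ℝ) • x) * (∫ y, min 1 (‖y‖ ^ 2) * J y ∂μ) +
        J ((1 / 2 : ℝ) • x) * ∫ y, φ y ∂μ := by
  have hJint := integrableOn_norm_ge_of_integrable_min_one_sq_mul hlevy one_pos
  have hφint' : Integrable (fun y => φ (x - y)) μ := hφint.comp_sub_left x
  have hpoint : ∀ y, ‖(φ x - φ (x - y)) * J y‖ ≤
      φ ((1 / 2 : ℝ) • x) * J y + J ((1 / 2 : ℝ) • x) * φ (x - y) := fun y => by
    rw [Real.norm_eq_abs, abs_mul, abs_of_nonneg (hJ0 y)]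
    exact abs_sub_mul_le_of_two_mul_le_norm hφ0 hφrad hJ0 hJmono hx y
  calc |∫ y in {y | 1 ≤ ‖y‖}, (φ x - φ (x - y)) * J y ∂μ|
      ≤ ∫ y in {y | 1 ≤ ‖y‖}, (φ ((1 / 2 : ℝ) • x) * J y +
          J ((1 / 2 : ℝ) • x) * φ (x - y)) ∂μ :=
        norm_integral_le_of_norm_le ((hJint.const_mul _).add (hφint'.const_mul _).integrableOn)
          (ae_of_all _ hpoint)
    _ = φ ((1 / 2 : ℝ) • x) * (∫ y in {y | 1 ≤ ‖y‖}, J y ∂μ) +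
          J ((1 / 2 : ℝ) • x) * ∫ y in {y | 1 ≤ ‖y‖}, φ (x - y) ∂μ := by
        rw [integral_add (hJint.const_mul _) (hφint'.const_mul _).integrableOn,
          integral_const_mul, integral_const_mul]
    _ ≤ φ ((1 / 2 : ℝ) • x) * (∫ y, min 1 (‖y‖ ^ 2) * J y ∂μ) +
          J ((1 / 2 : ℝ) • x) * ∫ y, φ (x - y) ∂μ := by
        refine add_le_add (mul_le_mul_of_nonneg_left ?_ (hφ0 _))
          (mul_le_mul_of_nonneg_left ?_ (hJ0 _))
        · exact setIntegral_one_le_norm_le_integral_min_one_sq_mul hJ0 hlevy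
        · exact setIntegral_le_integral hφint' (ae_of_all _ fun y => hφ0 _)
    _ = φ ((1 / 2 : ℝ) • x) * (∫ y, min 1 (‖y‖ ^ 2) * J y ∂μ) +
          J ((1 / 2 : ℝ) • x) * ∫ y, φ y ∂μ := by
        rw [integral_sub_left_eq_self φ μ x]

end LevyKernel

theorem stmt9_general (N : ℕ) (c : ℝ)
    (J φ : EuclideanSpace ℝ (Fin N) → ℝ)
    (hJ0 : ∀ z, 0 ≤ J z)
    (hJrad : ∀ z w, ‖z‖ = ‖w‖ → J z = J w)
    (hJmono : ∃ R₀ > (0:ℝ), ∀ z w, R₀ ≤ ‖z‖ → ‖z‖ ≤ ‖w‖ → J w ≤ J z)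
    (hlevy : Integrable (fun z => min 1 (‖z‖ ^ 2) * J z))
    (hφsmooth : ContDiff ℝ 2 φ) (hφint : Integrable φ)
    (hφpos : ∀ x, 0 < φ x)
    (hφrad : ∀ x y, ‖x‖ ≤ ‖y‖ → φ y ≤ φ x)
    (hφhess : ∀ x, x ≠ 0 → ‖iteratedFDeriv ℝ 2 φ x‖ ≤ c * ‖x‖ ^ (-2:ℝ) * φ x)
    (Lφ : EuclideanSpace ℝ (Fin N) → ℝ)
    (hL : ∀ x, Tendsto (fun ε : ℝ =>
        ∫ z in {z | ε < ‖x - z‖}, (φ x - φ z) * J (x - z))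
      (nhdsWithin 0 (Ioi 0)) (nhds (Lφ x))) :
    (∃ M, ∀ x, |Lφ x| ≤ M) ∧
    ∃ R > (0:ℝ), ∃ C > (0:ℝ), ∀ x, R ≤ ‖x‖ →
      |Lφ x| ≤ C * (φ ((1/2 : ℝ) • x) + J ((1/2 : ℝ) • x)) := by
  obtain ⟨R₀, -, hJmono⟩ := hJmono
  have hJeven : ∀ y, J (-y) = J y := fun y => hJrad _ _ (norm_neg y)
  have hφ0 : ∀ x, 0 ≤ φ x := fun x => (hφpos x).le
  have hφB : ∀ x, |φ x| ≤ φ 0 := fun x => by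
    rw [abs_of_nonneg (hφ0 x)]
    exact hφrad 0 x (by simp)
  set A := ∫ y, min 1 (‖y‖ ^ 2) * J y
  have hA : 0 ≤ A :=
    integral_nonneg fun y => mul_nonneg (le_min zero_le_one (sq_nonneg _)) (hJ0 y)
  have hLφ : ∀ x K, (∀ ξ ∈ closedBall x 1, ‖iteratedFDeriv ℝ 2 φ ξ‖ ≤ K) →
      |Lφ x| ≤ K * A + |∫ y in {y | 1 ≤ ‖y‖}, (φ x - φ (x - y)) * J y| := fun x _ hK =>
    abs_le_of_tendsto_truncation hJ0 hJeven hlevy hφsmooth hφB hK (hL x)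
  constructor
  · obtain ⟨K, hK⟩ := exists_forall_norm_iteratedFDeriv_two_le hφsmooth hφ0 hφrad hφhess
    exact ⟨K * A + 2 * φ 0 * A, fun x => (hLφ x K fun ξ _ => hK ξ).trans
      (add_le_add_right (abs_setIntegral_one_le_norm_le_of_abs_le hJ0 hlevy hφB x) _)⟩
  · have hI : 0 ≤ ∫ y, φ y := integral_nonneg hφ0
    refine ⟨max 2 (2 * R₀), lt_max_of_lt_left two_pos, max c 0 * A + A + (∫ y, φ y) + 1,
      by nlinarith [mul_nonneg (le_max_right c 0) hA], fun x hx => ?_⟩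
    have hφh := hφpos ((1 / 2 : ℝ) • x)
    have hJh := hJ0 ((1 / 2 : ℝ) • x)
    calc |Lφ x| ≤ max c 0 * φ ((1 / 2 : ℝ) • x) * A +
          (φ ((1 / 2 : ℝ) • x) * A + J ((1 / 2 : ℝ) • x) * ∫ y, φ y) :=
        (hLφ x _ fun ξ => norm_iteratedFDeriv_two_le_of_mem_closedBall hφ0 hφrad hφhess
          (le_of_max_le_left hx)).trans (add_le_add_right
            (abs_setIntegral_one_le_norm_le_of_two_mul_le_norm hφint hφ0 hφrad hJ0 hlevy hJmono
              (le_of_max_le_right hx)) _)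
      _ ≤ (max c 0 * A + A + (∫ y, φ y) + 1) *
          (φ ((1 / 2 : ℝ) • x) + J ((1 / 2 : ℝ) • x)) := by
        nlinarith [mul_nonneg (mul_nonneg (le_max_right c 0) hA) hJh, mul_nonneg hA hJh,
          mul_nonneg hI hφh.le]

theorem stmt9 (N : ℕ) (hN : 1 ≤ N) (c : ℝ)
    (J φ : EuclideanSpace ℝ (Fin N) → ℝ)
    (hJ0 : ∀ z, 0 ≤ J z)
    (hJrad : ∀ z w, ‖z‖ = ‖w‖ → J z = J w)
    (hJmono : ∃ R₀ > (0:ℝ), ∀ z w, R₀ ≤ ‖z‖ → ‖z‖ ≤ ‖w‖ → J w ≤ J z)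
    (hlevy : Integrable (fun z => min 1 (‖z‖ ^ 2) * J z))
    (hφsmooth : ContDiff ℝ 2 φ) (hφint : Integrable φ)
    (hφpos : ∀ x, 0 < φ x)
    (hφrad : ∀ x y, ‖x‖ ≤ ‖y‖ → φ y ≤ φ x)
    (hφhess : ∀ x, x ≠ 0 → ‖iteratedFDeriv ℝ 2 φ x‖ ≤ c * ‖x‖ ^ (-2:ℝ) * φ x)
    (Lφ : EuclideanSpace ℝ (Fin N) → ℝ)
    (hL : ∀ x, Tendsto (fun ε : ℝ =>
        ∫ z in {z | ε < ‖x - z‖}, (φ x - φ z) * J (x - z))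
      (nhdsWithin 0 (Ioi 0)) (nhds (Lφ x))) :
    (∃ M, ∀ x, |Lφ x| ≤ M) ∧
    ∃ R > (0:ℝ), ∃ C > (0:ℝ), ∀ x, R ≤ ‖x‖ →
      |Lφ x| ≤ C * (φ ((1/2 : ℝ) • x) + J ((1/2 : ℝ) • x)) :=
  stmt9_general N c J φ hJ0 hJrad hJmono hlevy hφsmooth hφint hφpos hφrad hφhess Lφ hL
end

section
/- Let 𝒥 be a Lévy kernel with ∫_{ℝᴺ}(|y|² + 2|y|·|x|)𝒥(y)dy controlled as follows: ∫|y|²𝒥(y)dy < ∞ and 𝒥 radially symmetric. Then for φ_λ(x) = e^{−λ|x|²}, λ > 0, the operator ℒφ_λ satisfies ℒφ_λ(x) ≤ C λ e^{−λ|x|²} for all x ∈ ℝᴺ, with C independent of λ ∈ (0,1]. -/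
/-!
Write `φ(x) = exp (-λ‖x‖²)`. Since `1 - e^{-s} ≤ s` for every real `s`,
`φ(x) - φ(x - y) ≤ λ φ(x) (‖x - y‖² - ‖x‖²) = λ φ(x) (‖y‖² - 2⟪x, y⟫)`.
Integrated against `𝒥` over `{ε < ‖y‖}`, the odd term `⟪x, y⟫ 𝒥(y)` contributes nothing, so every
truncated integral is at most `λ φ(x) ∫ ‖y‖² 𝒥(y) dy`, and this bound passes to the principal value.
-/

open MeasureTheory Set Filter

theorem setIntegral_eq_zero_of_odd {G : Type*} [AddGroup G] [MeasurableSpace G] [MeasurableNeg G]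
    {μ : Measure G} [μ.IsNegInvariant] {f : G → ℝ} {s : Set G} (hs : Neg.neg ⁻¹' s = s)
    (hf : ∀ y, f (-y) = -f y) : ∫ y in s, f y ∂μ = 0 := by
  have h := (Measure.measurePreserving_neg μ).setIntegral_preimage_emb
    (MeasurableEquiv.neg G).measurableEmbedding f s
  simp only [hs, hf, integral_neg] at h
  linarith

theorem exp_neg_mul_norm_sq_sub_le {E : Type*} [NormedAddCommGroup E] [InnerProductSpace ℝ E]
    (lam : ℝ) (x y : E) :
    Real.exp (-lam * ‖x‖ ^ 2) - Real.exp (-lam * ‖x - y‖ ^ 2) ≤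
      lam * Real.exp (-lam * ‖x‖ ^ 2) * (‖y‖ ^ 2 - 2 * inner ℝ x y) := by
  set s := lam * (‖y‖ ^ 2 - 2 * inner ℝ x y) with hs
  have hsplit : Real.exp (-lam * ‖x - y‖ ^ 2) = Real.exp (-lam * ‖x‖ ^ 2) * Real.exp (-s) := by
    rw [← Real.exp_add, norm_sub_sq_real, hs]
    ring_nf
  have hexp : 1 - Real.exp (-s) ≤ s := by linarith [Real.add_one_le_exp (-s)]
  calc Real.exp (-lam * ‖x‖ ^ 2) - Real.exp (-lam * ‖x - y‖ ^ 2)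
      = Real.exp (-lam * ‖x‖ ^ 2) * (1 - Real.exp (-s)) := by rw [hsplit]; ring
    _ ≤ Real.exp (-lam * ‖x‖ ^ 2) * s := mul_le_mul_of_nonneg_left hexp (Real.exp_pos _).le
    _ = lam * Real.exp (-lam * ‖x‖ ^ 2) * (‖y‖ ^ 2 - 2 * inner ℝ x y) := by ring

section

variable {E : Type*} [NormedAddCommGroup E] [MeasurableSpace E] [BorelSpace E]
  {μ : Measure E} {J : E → ℝ} {ε : ℝ}

theorem setIntegral_norm_sub_gt [μ.IsAddLeftInvariant] [μ.IsNegInvariant] (x : E) (g : E → ℝ) :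
    ∫ z in {z | ε < ‖x - z‖}, g (x - z) ∂μ = ∫ y in {y | ε < ‖y‖}, g y ∂μ :=
  (Measure.measurePreserving_sub_left μ x).setIntegral_preimage_emb
    (MeasurableEquiv.subLeft x).measurableEmbedding g {y | ε < ‖y‖}

theorem integrableOn_mul_of_abs_le_mul_norm (hmom : Integrable (fun y => ‖y‖ ^ 2 * J y) μ)
    (hε : 0 < ε) {b : E → ℝ} (hb : Measurable b) {C : ℝ} (hbC : ∀ y, ε < ‖y‖ → |b y| ≤ C * ‖y‖) :
    IntegrableOn (fun y => b y * J y) {y | ε < ‖y‖} μ := by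
  have hT : MeasurableSet {y : E | ε < ‖y‖} := measurableSet_lt measurable_const measurable_norm
  have hbdd : ∀ y, ε < ‖y‖ → ‖b y / ‖y‖ ^ 2‖ ≤ C / ε := by
    intro y hy
    have hy0 : 0 < ‖y‖ := hε.trans hy
    have hC : 0 ≤ C := nonneg_of_mul_nonneg_left ((abs_nonneg _).trans (hbC y hy)) hy0
    rw [Real.norm_eq_abs, abs_div, abs_of_pos (a := ‖y‖ ^ 2) (by positivity),
      div_le_div_iff₀ (by positivity) hε]
    nlinarith [hbC y hy, mul_le_mul_of_nonneg_left hy.le (mul_nonneg hC hy0.le)]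
  refine (hmom.restrict.bdd_mul (hb.div (measurable_norm.pow_const 2)).aestronglyMeasurable
    ((ae_restrict_iff' hT).2 (ae_of_all _ hbdd))).congr ?_
  filter_upwards [ae_restrict_mem hT] with y (hy : ε < ‖y‖)
  have : ‖y‖ ≠ 0 := (hε.trans hy).ne'
  simp only [Pi.div_apply]
  field_simp

variable [InnerProductSpace ℝ E]

theorem setIntegral_exp_neg_mul_norm_sq_sub_mul_le [μ.IsNegInvariant] (hJ0 : ∀ y, 0 ≤ J y)
    (hJeven : ∀ y, J (-y) = J y) (hmom : Integrable (fun y => ‖y‖ ^ 2 * J y) μ) (hε : 0 < ε)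
    {lam : ℝ} (hlam : 0 ≤ lam) (x : E) :
    ∫ y in {y | ε < ‖y‖}, (Real.exp (-lam * ‖x‖ ^ 2) - Real.exp (-lam * ‖x - y‖ ^ 2)) * J y ∂μ ≤
      lam * Real.exp (-lam * ‖x‖ ^ 2) * ∫ y, ‖y‖ ^ 2 * J y ∂μ := by
  set φ := Real.exp (-lam * ‖x‖ ^ 2)
  have hT : MeasurableSet {y : E | ε < ‖y‖} := measurableSet_lt measurable_const measurable_norm
  have hmomT : IntegrableOn (fun y => ‖y‖ ^ 2 * J y) {y | ε < ‖y‖} μ := hmom.integrableOn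
  have hinner : IntegrableOn (fun y => inner ℝ x y * J y) {y | ε < ‖y‖} μ :=
    integrableOn_mul_of_abs_le_mul_norm hmom hε (by fun_prop) fun y _ =>
      abs_real_inner_le_norm x y
  have hlhs : IntegrableOn (fun y => (φ - Real.exp (-lam * ‖x - y‖ ^ 2)) * J y)
      {y | ε < ‖y‖} μ := by
    refine integrableOn_mul_of_abs_le_mul_norm hmom hε (by fun_prop) (C := ε⁻¹) fun y hy => ?_
    have hφ : φ ≤ 1 := Real.exp_le_one_iff.2 (by nlinarith [sq_nonneg ‖x‖])
    have he : Real.exp (-lam * ‖x - y‖ ^ 2) ≤ 1 :=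
      Real.exp_le_one_iff.2 (by nlinarith [sq_nonneg ‖x - y‖])
    have h1 : 1 ≤ ε⁻¹ * ‖y‖ := by rw [inv_mul_eq_div, one_le_div hε]; exact hy.le
    rw [abs_le]
    constructor <;> linarith [Real.exp_pos (-lam * ‖x‖ ^ 2), Real.exp_pos (-lam * ‖x - y‖ ^ 2)]
  have hrhs : IntegrableOn (fun y => lam * φ * (‖y‖ ^ 2 * J y - 2 * (inner ℝ x y * J y)))
      {y | ε < ‖y‖} μ := by
    exact (hmomT.sub (hinner.const_mul 2)).const_mul (lam * φ)
  have hodd : ∫ y in {y | ε < ‖y‖}, inner ℝ x y * J y ∂μ = 0 :=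
    setIntegral_eq_zero_of_odd (by ext; simp) fun y => by rw [inner_neg_right, hJeven]; ring
  calc ∫ y in {y | ε < ‖y‖}, (φ - Real.exp (-lam * ‖x - y‖ ^ 2)) * J y ∂μ
      ≤ ∫ y in {y | ε < ‖y‖}, lam * φ * (‖y‖ ^ 2 * J y - 2 * (inner ℝ x y * J y)) ∂μ :=
        setIntegral_mono_on hlhs hrhs hT fun y _ =>
          (mul_le_mul_of_nonneg_right (exp_neg_mul_norm_sq_sub_le lam x y) (hJ0 y)).trans_eq
            (by ring)
    _ = lam * φ * ∫ y in {y | ε < ‖y‖}, ‖y‖ ^ 2 * J y ∂μ := by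
        rw [integral_const_mul, integral_sub hmomT (hinner.const_mul 2), integral_const_mul, hodd]
        ring
    _ ≤ lam * φ * ∫ y, ‖y‖ ^ 2 * J y ∂μ :=
        mul_le_mul_of_nonneg_left
          (setIntegral_le_integral hmom (ae_of_all _ fun y => mul_nonneg (sq_nonneg _) (hJ0 y)))
          (by positivity)

end

theorem stmt11_general (N : ℕ)
    (J : EuclideanSpace ℝ (Fin N) → ℝ)
    (hJ0 : ∀ z, 0 ≤ J z)
    (hJrad : ∀ z w, ‖z‖ = ‖w‖ → J z = J w)
    (hmom : Integrable (fun y => ‖y‖ ^ 2 * J y)) :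
    ∃ C > (0:ℝ), ∀ lam : ℝ, 0 < lam → lam ≤ 1 →
      ∀ Lw : EuclideanSpace ℝ (Fin N) → ℝ,
        (∀ x, Tendsto (fun ε : ℝ =>
            ∫ z in {z | ε < ‖x - z‖},
              (Real.exp (-lam * ‖x‖ ^ 2) - Real.exp (-lam * ‖z‖ ^ 2)) * J (x - z))
          (nhdsWithin 0 (Ioi 0)) (nhds (Lw x))) →
        ∀ x, Lw x ≤ C * lam * Real.exp (-lam * ‖x‖ ^ 2) := by
  have hM : 0 ≤ ∫ y, ‖y‖ ^ 2 * J y := integral_nonneg fun y => mul_nonneg (sq_nonneg _) (hJ0 y)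
  refine ⟨(∫ y, ‖y‖ ^ 2 * J y) + 1, by linarith, fun lam hlam _ Lw hLw x => ?_⟩
  refine le_of_tendsto (hLw x) ?_
  filter_upwards [self_mem_nhdsWithin] with ε (hε : 0 < ε)
  have hshift := setIntegral_norm_sub_gt (μ := volume) (ε := ε) x
    fun y => (Real.exp (-lam * ‖x‖ ^ 2) - Real.exp (-lam * ‖x - y‖ ^ 2)) * J y
  simp only [sub_sub_cancel] at hshift
  rw [hshift]
  calc _ ≤ lam * Real.exp (-lam * ‖x‖ ^ 2) * ∫ y, ‖y‖ ^ 2 * J y :=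
        setIntegral_exp_neg_mul_norm_sq_sub_mul_le hJ0 (fun y => hJrad _ _ (norm_neg y)) hmom hε
          hlam.le x
    _ ≤ ((∫ y, ‖y‖ ^ 2 * J y) + 1) * lam * Real.exp (-lam * ‖x‖ ^ 2) := by
        nlinarith [mul_pos hlam (Real.exp_pos (-lam * ‖x‖ ^ 2))]

theorem stmt11 (N : ℕ) (hN : 1 ≤ N)
    (J : EuclideanSpace ℝ (Fin N) → ℝ)
    (hJ0 : ∀ z, 0 ≤ J z)
    (hJrad : ∀ z w, ‖z‖ = ‖w‖ → J z = J w)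
    (hmom : Integrable (fun y => ‖y‖ ^ 2 * J y)) :
    ∃ C > (0:ℝ), ∀ lam : ℝ, 0 < lam → lam ≤ 1 →
      ∀ Lw : EuclideanSpace ℝ (Fin N) → ℝ,
        (∀ x, Tendsto (fun ε : ℝ =>
            ∫ z in {z | ε < ‖x - z‖},
              (Real.exp (-lam * ‖x‖ ^ 2) - Real.exp (-lam * ‖z‖ ^ 2)) * J (x - z))
          (nhdsWithin 0 (Ioi 0)) (nhds (Lw x))) →
        ∀ x, Lw x ≤ C * lam * Real.exp (-lam * ‖x‖ ^ 2) :=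
  stmt11_general N J hJ0 hJrad hmom
end

section
/- Let 0 < α < 1 and 0 < a₁, a₂ < 1, and let θ > 0, p > 1 with pθ < 1, a₂ ≥ θ and a₂ + pθ − 1 = θ (that is, 1 − a₂ = pθ − θ). Then there is a constant C such that for all t ≥ 2, ∫₀ᵗ (t−τ)^{−a(t−τ)} (1+τ)^{−pθ} dτ ≤ C t^{−θ}, where a(s) = a₁ for s < 1 and a(s) = a₂ for s ≥ 1. -/
open MeasureTheory intervalIntegral Set

private noncomputable def gAux (a₁ a₂ : ℝ) : ℝ → ℝ :=
  fun s => s ^ (-(if s < 1 then a₁ else a₂))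

theorem stmt17 (p θ a₁ a₂ : ℝ) (hp : 1 < p) (hθ : 0 < θ)
    (ha₁0 : 0 < a₁) (ha₁1 : a₁ < 1) (ha₂0 : 0 < a₂) (ha₂1 : a₂ < 1)
    (hpθ : p * θ < 1) (hrel : θ - a₂ = p * θ - 1) :
    ∃ C : ℝ, ∀ t ≥ (2:ℝ),
      (∫ τ in (0:ℝ)..t,
        (t - τ) ^ (-(if t - τ < 1 then a₁ else a₂)) * (1 + τ) ^ (-(p * θ)))
      ≤ C * t ^ (-θ) := by
  have h1pθ : 0 < 1 - p * θ := by linarith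
  have hθpθ : θ ≤ p * θ := by nlinarith
  refine ⟨2 ^ a₂ / (1 - p * θ) + 2 ^ (p * θ) / (1 - a₁) + 2 ^ θ / (1 - a₂), ?_⟩
  intro t ht
  have ht0 : (0:ℝ) < t := by linarith
  set g : ℝ → ℝ := gAux a₁ a₂ with hg_def
  set m : ℝ := t / 2 with hm_def
  have hm1 : (1:ℝ) ≤ m := by rw [hm_def]; linarith
  have hm0 : (0:ℝ) < m := by linarith
  have hmt : m ≤ t := by rw [hm_def]; linarith
  have htm : t - m = m := by rw [hm_def]; ring
  have h1mt : 1 + m ≤ t := by rw [hm_def]; linarith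
  have hhalf : ∀ x : ℝ, m ^ (-x) = 2 ^ x * t ^ (-x) := by
    intro x
    rw [hm_def, Real.div_rpow ht0.le (by norm_num),
      Real.rpow_neg (by norm_num : (0:ℝ) ≤ 2) x, div_eq_mul_inv, inv_inv, mul_comm]
  -- measurability
  have hmc : ∀ c : ℝ, Measurable fun x : ℝ => x ^ c := by
    intro c
    refine measurable_of_measurable_on_compl_singleton 0
      (Continuous.measurable <| continuousOn_iff_continuous_restrict.1 ?_)
    exact ContinuousOn.rpow_const continuousOn_id (fun x hx => Or.inl hx)
  have hg_meas : Measurable g := by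
    have hgeq : g = fun s => if s < 1 then s ^ (-a₁) else s ^ (-a₂) := by
      funext s
      rw [hg_def]
      simp only [gAux]
      split <;> rfl
    rw [hgeq]
    exact Measurable.ite (measurableSet_lt measurable_id measurable_const)
      (hmc (-a₁)) (hmc (-a₂))
  have hF_meas : Measurable (fun τ : ℝ => g (t - τ) * (1 + τ) ^ (-(p * θ))) :=
    (hg_meas.comp (measurable_const.sub measurable_id)).mul
      ((hmc (-(p * θ))).comp (measurable_const.add measurable_id))
  -- integrability of g on pieces
  have hint_a₁ : IntervalIntegrable (fun s : ℝ => s ^ (-a₁)) volume 0 1 :=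
    intervalIntegral.intervalIntegrable_rpow' (by linarith)
  have hg_int01 : IntervalIntegrable g volume 0 1 := by
    have h := hint_a₁
    rw [intervalIntegrable_iff_integrableOn_Ioc_of_le zero_le_one] at h ⊢
    rw [integrableOn_Ioc_iff_integrableOn_Ioo] at h ⊢
    refine h.congr_fun (fun s hs => ?_) measurableSet_Ioo
    simp only [hg_def, gAux]
    rw [if_pos hs.2]
  have hint_a₂ : IntervalIntegrable (fun s : ℝ => s ^ (-a₂)) volume 1 m :=
    intervalIntegral.intervalIntegrable_rpow' (by linarith)
  have hg_int1m : IntervalIntegrable g volume 1 m := by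
    have h := hint_a₂
    rw [intervalIntegrable_iff_integrableOn_Ioc_of_le hm1] at h ⊢
    refine h.congr_fun (fun s hs => ?_) measurableSet_Ioc
    simp only [hg_def, gAux]
    rw [if_neg (not_lt.2 hs.1.le)]
  have hg_int0m : IntervalIntegrable g volume 0 m := hg_int01.trans hg_int1m
  have hg_nonneg : ∀ s : ℝ, 0 ≤ s → 0 ≤ g s := fun s hs => Real.rpow_nonneg hs _
  -- integrability of τ ↦ g (t - τ) on m..t
  have hgc : IntervalIntegrable (fun τ : ℝ => g (t - τ)) volume m t := by
    have h := (hg_int0m.comp_sub_left t).symm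
    rw [sub_zero, htm] at h
    exact h
  -- integrability of F on 0..m
  have hF_int0m : IntervalIntegrable
      (fun τ : ℝ => g (t - τ) * (1 + τ) ^ (-(p * θ))) volume 0 m := by
    rw [intervalIntegrable_iff_integrableOn_Ioc_of_le hm0.le]
    refine Integrable.mono'
      (integrableOn_const (C := (1:ℝ)) measure_Ioc_lt_top.ne)
      hF_meas.aestronglyMeasurable ?_
    filter_upwards [ae_restrict_mem measurableSet_Ioc] with τ hτ
    have h1τ : (1:ℝ) ≤ 1 + τ := by linarith [hτ.1.le]
    have htτ : (1:ℝ) ≤ t - τ := by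
      have h2 := hτ.2
      linarith
    have hgle : g (t - τ) ≤ 1 := by
      simp only [hg_def, gAux]
      exact Real.rpow_le_one_of_one_le_of_nonpos htτ
        (by rw [if_neg (not_lt.2 htτ)]; linarith)
    have hple : (1 + τ) ^ (-(p * θ)) ≤ 1 :=
      Real.rpow_le_one_of_one_le_of_nonpos h1τ (by nlinarith)
    have hg0 : 0 ≤ g (t - τ) := hg_nonneg _ (by linarith)
    have hp0 : 0 ≤ (1 + τ) ^ (-(p * θ)) := Real.rpow_nonneg (by linarith) _
    rw [Real.norm_eq_abs, abs_of_nonneg (mul_nonneg hg0 hp0)]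
    calc g (t - τ) * (1 + τ) ^ (-(p * θ)) ≤ 1 * 1 :=
          mul_le_mul hgle hple hp0 zero_le_one
      _ = 1 := by ring
  -- integrability of F on m..t
  have hF_intmt : IntervalIntegrable
      (fun τ : ℝ => g (t - τ) * (1 + τ) ^ (-(p * θ))) volume m t := by
    rw [intervalIntegrable_iff_integrableOn_Ioc_of_le hmt]
    have hgc' := hgc
    rw [intervalIntegrable_iff_integrableOn_Ioc_of_le hmt] at hgc'
    refine hgc'.mono' hF_meas.aestronglyMeasurable ?_
    filter_upwards [ae_restrict_mem measurableSet_Ioc] with τ hτ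
    have hg0 : 0 ≤ g (t - τ) := hg_nonneg _ (by linarith [hτ.2])
    have hp0 : (1 + τ) ^ (-(p * θ)) ≤ 1 :=
      Real.rpow_le_one_of_one_le_of_nonpos (by linarith [hτ.1]) (by nlinarith)
    have hpn : 0 ≤ (1 + τ) ^ (-(p * θ)) := Real.rpow_nonneg (by linarith [hτ.1.le]) _
    rw [Real.norm_eq_abs, abs_of_nonneg (mul_nonneg hg0 hpn)]
    calc g (t - τ) * (1 + τ) ^ (-(p * θ)) ≤ g (t - τ) * 1 :=
          mul_le_mul_of_nonneg_left hp0 hg0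
      _ = g (t - τ) := by ring
  -- split the integral
  have hsplit : (∫ τ in (0:ℝ)..t, g (t - τ) * (1 + τ) ^ (-(p * θ)))
      = (∫ τ in (0:ℝ)..m, g (t - τ) * (1 + τ) ^ (-(p * θ)))
        + ∫ τ in m..t, g (t - τ) * (1 + τ) ^ (-(p * θ)) :=
    (integral_add_adjacent_intervals hF_int0m hF_intmt).symm
  -- integrability of (1+τ)^(-pθ) on 0..m
  have hone : IntervalIntegrable (fun τ : ℝ => (1 + τ) ^ (-(p * θ))) volume 0 m := by
    apply ContinuousOn.intervalIntegrable
    apply ContinuousOn.rpow_const (by fun_prop)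
    intro x hx
    rw [Set.uIcc_of_le hm0.le] at hx
    exact Or.inl (by intro h; rw [← h] at hx; linarith [hx.1])
  -- piece 1 bound
  have hpiece1 : (∫ τ in (0:ℝ)..m, g (t - τ) * (1 + τ) ^ (-(p * θ)))
      ≤ 2 ^ a₂ / (1 - p * θ) * t ^ (-θ) := by
    have hmono : (∫ τ in (0:ℝ)..m, g (t - τ) * (1 + τ) ^ (-(p * θ)))
        ≤ ∫ τ in (0:ℝ)..m, m ^ (-a₂) * (1 + τ) ^ (-(p * θ)) := by
      refine integral_mono_on hm0.le hF_int0m (hone.const_mul _) (fun τ hτ => ?_)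
      have htτ : m ≤ t - τ := by
        have h2 := hτ.2
        linarith
      have h1tτ : (1:ℝ) ≤ t - τ := le_trans hm1 htτ
      have hgeq : g (t - τ) = (t - τ) ^ (-a₂) := by
        simp only [hg_def, gAux]
        rw [if_neg (not_lt.2 h1tτ)]
      rw [hgeq]
      exact mul_le_mul_of_nonneg_right
        (Real.rpow_le_rpow_of_nonpos hm0 htτ (by linarith))
        (Real.rpow_nonneg (by linarith [hτ.1]) _)
    have hcm : (∫ τ in (0:ℝ)..m, m ^ (-a₂) * (1 + τ) ^ (-(p * θ)))
        = m ^ (-a₂) * ∫ τ in (0:ℝ)..m, (1 + τ) ^ (-(p * θ)) :=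
      intervalIntegral.integral_const_mul _ _
    have hval1 : (∫ τ in (0:ℝ)..m, (1 + τ) ^ (-(p * θ)))
        = ((1 + m) ^ (-(p * θ) + 1) - (1 + 0) ^ (-(p * θ) + 1)) / (-(p * θ) + 1) := by
      have h1 : (∫ τ in (0:ℝ)..m, (1 + τ) ^ (-(p * θ)))
          = ∫ u in (1+0:ℝ)..(1+m), u ^ (-(p * θ)) :=
        intervalIntegral.integral_comp_add_left (fun u => u ^ (-(p * θ))) 1
      rw [h1, integral_rpow (Or.inl (by linarith))]
    have hbound1 : (∫ τ in (0:ℝ)..m, (1 + τ) ^ (-(p * θ)))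
        ≤ t ^ (1 - p * θ) / (1 - p * θ) := by
      rw [hval1]
      have hc : -(p * θ) + 1 = 1 - p * θ := by ring
      rw [hc]
      have h10 : ((1:ℝ) + 0) ^ (1 - p * θ) = 1 := by norm_num
      rw [h10]
      have h1m : (1 + m) ^ (1 - p * θ) ≤ t ^ (1 - p * θ) :=
        Real.rpow_le_rpow (by linarith) h1mt (by linarith)
      exact div_le_div₀ (Real.rpow_nonneg ht0.le _) (by linarith) h1pθ le_rfl
    have hexp : t ^ (-a₂) * t ^ (1 - p * θ) = t ^ (-θ) := by
      rw [← Real.rpow_add ht0]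
      congr 1
      linarith
    calc (∫ τ in (0:ℝ)..m, g (t - τ) * (1 + τ) ^ (-(p * θ)))
        ≤ m ^ (-a₂) * ∫ τ in (0:ℝ)..m, (1 + τ) ^ (-(p * θ)) := by
          rw [← hcm]; exact hmono
      _ ≤ m ^ (-a₂) * (t ^ (1 - p * θ) / (1 - p * θ)) :=
          mul_le_mul_of_nonneg_left hbound1 (Real.rpow_nonneg hm0.le _)
      _ = 2 ^ a₂ / (1 - p * θ) * (t ^ (-a₂) * t ^ (1 - p * θ)) := by
          rw [hhalf a₂]; ring
      _ = 2 ^ a₂ / (1 - p * θ) * t ^ (-θ) := by rw [hexp]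
  -- piece 2 bound
  have hpiece2 : (∫ τ in m..t, g (t - τ) * (1 + τ) ^ (-(p * θ)))
      ≤ (2 ^ (p * θ) / (1 - a₁) + 2 ^ θ / (1 - a₂)) * t ^ (-θ) := by
    have hmono : (∫ τ in m..t, g (t - τ) * (1 + τ) ^ (-(p * θ)))
        ≤ ∫ τ in m..t, (1 + m) ^ (-(p * θ)) * g (t - τ) := by
      refine integral_mono_on hmt hF_intmt (hgc.const_mul _) (fun τ hτ => ?_)
      have h1 : (1 + τ) ^ (-(p * θ)) ≤ (1 + m) ^ (-(p * θ)) :=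
        Real.rpow_le_rpow_of_nonpos (by linarith) (by linarith [hτ.1]) (by nlinarith)
      have hg0 : 0 ≤ g (t - τ) := hg_nonneg _ (by linarith [hτ.2])
      calc g (t - τ) * (1 + τ) ^ (-(p * θ)) ≤ g (t - τ) * (1 + m) ^ (-(p * θ)) :=
            mul_le_mul_of_nonneg_left h1 hg0
        _ = (1 + m) ^ (-(p * θ)) * g (t - τ) := mul_comm _ _
    have hcm : (∫ τ in m..t, (1 + m) ^ (-(p * θ)) * g (t - τ))
        = (1 + m) ^ (-(p * θ)) * ∫ τ in m..t, g (t - τ) :=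
      intervalIntegral.integral_const_mul _ _
    have hsub : (∫ τ in m..t, g (t - τ)) = ∫ s in (0:ℝ)..m, g s := by
      rw [intervalIntegral.integral_comp_sub_left g t, sub_self, htm]
    have hsplitg : (∫ s in (0:ℝ)..m, g s)
        = (∫ s in (0:ℝ)..1, g s) + ∫ s in (1:ℝ)..m, g s :=
      (integral_add_adjacent_intervals hg_int01 hg_int1m).symm
    have hg1 : (∫ s in (0:ℝ)..1, g s) ≤ 1 / (1 - a₁) := by
      have hle : ∀ s ∈ Icc (0:ℝ) 1, g s ≤ s ^ (-a₁) := by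
        intro s hs
        by_cases h : s < 1
        · simp only [hg_def, gAux]
          rw [if_pos h]
        · have hs1 : s = 1 := le_antisymm hs.2 (not_lt.1 h)
          subst hs1
          simp only [hg_def, gAux]
          norm_num
      have h := integral_mono_on zero_le_one hg_int01 hint_a₁ hle
      have hv : (∫ s in (0:ℝ)..1, s ^ (-a₁)) = 1 / (1 - a₁) := by
        rw [integral_rpow (Or.inl (by linarith)), Real.one_rpow,
          Real.zero_rpow (by linarith)]
        have hc : -a₁ + 1 = 1 - a₁ := by ring
        rw [hc]
        norm_num
      linarith [h, hv.le]
    have hg2 : (∫ s in (1:ℝ)..m, g s) ≤ m ^ (1 - a₂) / (1 - a₂) := by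
      have hEq : (∫ s in (1:ℝ)..m, g s) = ∫ s in (1:ℝ)..m, s ^ (-a₂) := by
        apply intervalIntegral.integral_congr
        intro s hs
        rw [Set.uIcc_of_le hm1] at hs
        simp only [hg_def, gAux]
        rw [if_neg (not_lt.2 hs.1)]
      rw [hEq, integral_rpow (Or.inl (by linarith)), Real.one_rpow]
      have hc : -a₂ + 1 = 1 - a₂ := by ring
      rw [hc]
      exact div_le_div₀ (Real.rpow_nonneg hm0.le _) (by linarith) (by linarith) le_rfl
    have hB0 : (0:ℝ) ≤ 1 / (1 - a₁) + m ^ (1 - a₂) / (1 - a₂) :=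
      add_nonneg (div_nonneg zero_le_one (by linarith))
        (div_nonneg (Real.rpow_nonneg hm0.le _) (by linarith))
    have h1pm : (1 + m) ^ (-(p * θ)) ≤ m ^ (-(p * θ)) :=
      Real.rpow_le_rpow_of_nonpos hm0 (by linarith) (by nlinarith)
    have h1pmn : (0:ℝ) ≤ (1 + m) ^ (-(p * θ)) := Real.rpow_nonneg (by linarith) _
    have hterm1 : m ^ (-(p * θ)) * (1 / (1 - a₁)) ≤ 2 ^ (p * θ) / (1 - a₁) * t ^ (-θ) := by
      rw [hhalf (p * θ)]
      have hle : t ^ (-(p * θ)) ≤ t ^ (-θ) :=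
        Real.rpow_le_rpow_of_exponent_le (by linarith) (by linarith)
      have h2 : (0:ℝ) < 2 ^ (p * θ) := Real.rpow_pos_of_pos (by norm_num) _
      calc 2 ^ (p * θ) * t ^ (-(p * θ)) * (1 / (1 - a₁))
          ≤ 2 ^ (p * θ) * t ^ (-θ) * (1 / (1 - a₁)) := by
            apply mul_le_mul_of_nonneg_right _ (div_nonneg zero_le_one (by linarith))
            exact mul_le_mul_of_nonneg_left hle h2.le
        _ = 2 ^ (p * θ) / (1 - a₁) * t ^ (-θ) := by ring
    have hterm2 : m ^ (-(p * θ)) * (m ^ (1 - a₂) / (1 - a₂)) = 2 ^ θ / (1 - a₂) * t ^ (-θ) := by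
      have hmm : m ^ (-(p * θ)) * m ^ (1 - a₂) = m ^ (-θ) := by
        rw [← Real.rpow_add hm0]
        congr 1
        linarith
      calc m ^ (-(p * θ)) * (m ^ (1 - a₂) / (1 - a₂))
          = m ^ (-(p * θ)) * m ^ (1 - a₂) / (1 - a₂) := by ring
        _ = m ^ (-θ) / (1 - a₂) := by rw [hmm]
        _ = 2 ^ θ * t ^ (-θ) / (1 - a₂) := by rw [hhalf θ]
        _ = 2 ^ θ / (1 - a₂) * t ^ (-θ) := by ring
    calc (∫ τ in m..t, g (t - τ) * (1 + τ) ^ (-(p * θ)))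
        ≤ (1 + m) ^ (-(p * θ)) * ∫ τ in m..t, g (t - τ) := by
          rw [← hcm]; exact hmono
      _ = (1 + m) ^ (-(p * θ)) * ((∫ s in (0:ℝ)..1, g s) + ∫ s in (1:ℝ)..m, g s) := by
          rw [hsub, hsplitg]
      _ ≤ (1 + m) ^ (-(p * θ)) * (1 / (1 - a₁) + m ^ (1 - a₂) / (1 - a₂)) :=
          mul_le_mul_of_nonneg_left (add_le_add hg1 hg2) h1pmn
      _ ≤ m ^ (-(p * θ)) * (1 / (1 - a₁) + m ^ (1 - a₂) / (1 - a₂)) :=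
          mul_le_mul_of_nonneg_right h1pm hB0
      _ = m ^ (-(p * θ)) * (1 / (1 - a₁)) + m ^ (-(p * θ)) * (m ^ (1 - a₂) / (1 - a₂)) := by
          ring
      _ ≤ 2 ^ (p * θ) / (1 - a₁) * t ^ (-θ) + 2 ^ θ / (1 - a₂) * t ^ (-θ) :=
          add_le_add hterm1 hterm2.le
      _ = (2 ^ (p * θ) / (1 - a₁) + 2 ^ θ / (1 - a₂)) * t ^ (-θ) := by ring
  calc (∫ τ in (0:ℝ)..t,
        (t - τ) ^ (-(if t - τ < 1 then a₁ else a₂)) * (1 + τ) ^ (-(p * θ)))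
      = (∫ τ in (0:ℝ)..m, g (t - τ) * (1 + τ) ^ (-(p * θ)))
        + ∫ τ in m..t, g (t - τ) * (1 + τ) ^ (-(p * θ)) := hsplit
    _ ≤ 2 ^ a₂ / (1 - p * θ) * t ^ (-θ)
        + (2 ^ (p * θ) / (1 - a₁) + 2 ^ θ / (1 - a₂)) * t ^ (-θ) :=
          add_le_add hpiece1 hpiece2
    _ = (2 ^ a₂ / (1 - p * θ) + 2 ^ (p * θ) / (1 - a₁) + 2 ^ θ / (1 - a₂)) * t ^ (-θ) := by
          ring
end
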